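/- arXiv:math/0602448 — 5 statements merged into one kernel-verified Lean document; each statement's English description precedes it below -/
import Mathlib

section
/- Quantum Laplace expansion with alien row: for a d×d submatrix A = X_{R,C} of an n×n q-generic matrix X, and for all row indices i, j ∈ R and each fixed structure, Σ_{c ∈ C} A_{jc} · (−q)^{pos_R(i) − pos_C(c)} · det_q(A with row i and column c deleted) = δ_{ij} · det_q A, where pos_R(i) is the position of i in the increasing enumeration of R. -/
/-- An `m × m` matrix `X` over a ring is `q`-generic. -/
def IsQGeneric {R : Type*} [Ring R] (q : Rˣ) {m : ℕ} (X : Fin m → Fin m → R) : Prop :=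
  (∀ i k l, k < l → X i l * X i k = ↑q * (X i k * X i l)) ∧
  (∀ i j k, i < j → X j k * X i k = ↑q * (X i k * X j k)) ∧
  (∀ i j k l, i < j → k < l → X j k * X i l = X i l * X j k) ∧
  (∀ i j k l, i < j → k < l →
    X j l * X i k = X i k * X j l + ((q : R) - ↑q⁻¹) * (X i l * X j k))

/-- Number of inversions of a permutation of `Fin d`. -/
def inversions {d : ℕ} (σ : Equiv.Perm (Fin d)) : ℕ :=
  (Finset.univ.filter (fun p : Fin d × Fin d => p.1 < p.2 ∧ σ p.2 < σ p.1)).card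

/-- The quantum determinant
`det_q A = Σ_σ (−q)^{−ℓ(σ)} a_{σ(1),1} ⋯ a_{σ(d),d}` (noncommutative ordered product). -/
noncomputable def detq {R : Type*} [Ring R] (q : Rˣ) {d : ℕ}
    (A : Fin d → Fin d → R) : R :=
  ∑ σ : Equiv.Perm (Fin d),
    (((-q)⁻¹ : Rˣ) : R) ^ (inversions σ) * (List.ofFn (fun i => A (σ i) i)).prod

/-!
`det_q` is a column determinant and expands naturally only along a column, while the identity is a
row expansion. Rows are handled through the quantum exterior algebra: with `ρᵢ = Σₖ Xᵢₖ θₖ`, the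
coefficient of `θ_C` in `ρ_{l₁} ⋯ ρ_{lₘ}` is a row determinant of `X_{l,C}`. The `q`-generic
relations make this coefficient vanish when a row index repeats and multiply it by `(-q)⁻¹` when two
adjacent rows are put in increasing order. Expanding `ρ_{j} ρ_{R ∖ i}` along its first factor then
gives the identity for row determinants: the product is `0` unless `j = i`, and for `j = i`
moving `ρᵢ` into place costs `(-q)^{-pos_R(i)}`. Finally, for increasing rows and columns the row
and column determinants of `X_{R,C}` coincide, by induction on the size: expand the column
determinant along its first column and the row determinant along its first row; the terms through
`x_{11}` agree by induction, and the remaining ones match after commuting `x_{k1}` with `x_{1l}`.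
-/

open Finset

namespace Equiv.Perm

def consSuccAbove {p : ℕ} (k : Fin (p + 1)) (τ : Perm (Fin p)) : Perm (Fin (p + 1)) :=
  (finSuccEquiv p).trans (τ.optionCongr.trans (finSuccEquiv' k).symm)

@[simp] lemma consSuccAbove_zero {p : ℕ} (k : Fin (p + 1)) (τ : Perm (Fin p)) :
    consSuccAbove k τ 0 = k := by
  simp [consSuccAbove]

@[simp] lemma consSuccAbove_succ {p : ℕ} (k : Fin (p + 1)) (τ : Perm (Fin p)) (t : Fin p) :
    consSuccAbove k τ t.succ = k.succAbove (τ t) := by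
  simp [consSuccAbove]

lemma consSuccAbove_bijective (p : ℕ) :
    Function.Bijective (fun x : Fin (p + 1) × Perm (Fin p) => consSuccAbove x.1 x.2) := by
  refine (Fintype.bijective_iff_injective_and_card _).mpr
    ⟨?_, by simp [Fintype.card_perm, Nat.factorial_succ]⟩
  rintro ⟨k, τ⟩ ⟨k', τ'⟩ h
  obtain rfl : k = k' := by simpa using DFunLike.congr_fun h 0
  refine Prod.ext rfl (Equiv.ext fun t => Fin.succAbove_right_injective (p := k) ?_)
  simpa using DFunLike.congr_fun h t.succ

end Equiv.Perm

open Equiv.Perm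

lemma inversions_eq_sum {d : ℕ} (σ : Equiv.Perm (Fin d)) :
    inversions σ = ∑ i : Fin d, ∑ j : Fin d, if i < j ∧ σ j < σ i then 1 else 0 := by
  rw [inversions, Finset.card_filter, ← Fintype.sum_prod_type']

lemma inversions_consSuccAbove {p : ℕ} (k : Fin (p + 1)) (τ : Equiv.Perm (Fin p)) :
    inversions (consSuccAbove k τ) = k + inversions τ := by
  rw [inversions_eq_sum, inversions_eq_sum, Fin.sum_univ_succ]
  congr 1
  · have hlt : ∀ t : Fin p, k.succAbove (τ t) < k ↔ (τ t : ℕ) < k := fun t => by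
      rw [Fin.succAbove_lt_iff_castSucc_lt, Fin.lt_def, Fin.val_castSucc]
    simp only [Fin.sum_univ_succ, consSuccAbove_zero, consSuccAbove_succ, lt_self_iff_false,
      false_and, if_false, zero_add, Fin.succ_pos, true_and, hlt]
    rw [Equiv.sum_comp τ (fun s => if (s : ℕ) < k then 1 else 0), ← Finset.card_filter,
      Fin.card_filter_val_lt]
    omega
  · refine Finset.sum_congr rfl fun s _ => ?_
    rw [Fin.sum_univ_succ]
    simp only [consSuccAbove_succ, Fin.succ_lt_succ_iff, Fin.succAbove_lt_succAbove_iff,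
      Fin.not_lt_zero, false_and, if_false, zero_add]

lemma Finset.sum_sum_erase_eq_zero_of_antisymm {γ M : Type*} [LinearOrder γ] [AddCommGroup M]
    (U : Finset γ) (H : γ → γ → M) (h : ∀ k ∈ U, ∀ k' ∈ U, k < k' → H k k' + H k' k = 0) :
    ∑ k ∈ U, ∑ k' ∈ U.erase k, H k k' = 0 := by
  rw [← Finset.sum_finset_product' U.offDiag _ _ fun p => by simp [and_comm, eq_comm]]
  refine Finset.sum_involution (fun p _ => p.swap) (fun p hp => ?_) (fun p hp _ => ?_)
    (fun p hp => ?_) (fun p _ => p.swap_swap)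
  · obtain ⟨hk, hk', hne⟩ := Finset.mem_offDiag.mp hp
    rcases hne.lt_or_gt with hlt | hgt
    · exact h _ hk _ hk' hlt
    · rw [add_comm]; exact h _ hk' _ hk hgt
  · exact fun hswap => (Finset.mem_offDiag.mp hp).2.2 (congrArg Prod.fst hswap).symm
  · obtain ⟨hk, hk', hne⟩ := Finset.mem_offDiag.mp hp
    exact Finset.mem_offDiag.mpr ⟨hk', hk, hne.symm⟩

lemma Finset.card_filter_lt_add_card_filter_erase_lt {γ : Type*} [LinearOrder γ]
    {U : Finset γ} {k k' : γ} (hk : k ∈ U) (hlt : k < k') :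
    #{u ∈ U | u < k'} + #{u ∈ U.erase k' | u < k}
      = #{u ∈ U | u < k} + #{u ∈ U.erase k | u < k'} + 1 := by
  have h₁ : {u ∈ U.erase k' | u < k} = {u ∈ U | u < k} := by
    rw [Finset.filter_erase, Finset.erase_eq_of_notMem]
    simp [hlt.le]
  have h₂ : #{u ∈ U.erase k | u < k'} + 1 = #{u ∈ U | u < k'} := by
    rw [Finset.filter_erase, Finset.card_erase_add_one (by simp [hk, hlt])]
  rw [h₁, ← h₂]
  omega

lemma card_filter_lt_image_univ {α : Type*} [LinearOrder α] {p : ℕ} {h : Fin p → α}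
    (hh : StrictMono h) (e : Fin p) :
    #{u ∈ univ.image h | u < h e} = e := by
  rw [Finset.filter_image, Finset.card_image_of_injective _ hh.injective]
  simp only [hh.lt_iff_lt]
  rw [Finset.filter_gt_eq_Iio, Fin.card_Iio]

lemma erase_image_univ {α : Type*} [LinearOrder α] {p : ℕ} {h : Fin (p + 1) → α} (hh : StrictMono h)
    (e : Fin (p + 1)) : (univ.image h).erase (h e) = univ.image (h ∘ e.succAbove) := by
  rw [← Finset.image_erase hh.injective, Fin.univ_succAbove _ e, Finset.erase_cons,
    Finset.map_eq_image, Finset.image_image, Fin.coe_succAboveEmb]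

section Ring

variable {R : Type*} [Ring R] (q : Rˣ)

local notation "ε" => (((-q)⁻¹ : Rˣ) : R)

lemma commute_negInv_pow (hq : ∀ x : R, ↑q * x = x * ↑q) (m : ℕ) (x : R) :
    Commute (ε ^ m) x :=
  ((Commute.neg_left (hq x)).units_inv_left (u := -q)).pow_left m

lemma negInv_mul_mul (z : R) : ε * ((q : R) * z) = -z := by
  rw [← mul_assoc, inv_neg, Units.val_neg, neg_mul, Units.inv_mul, neg_one_mul]

lemma negInv_pow_mul_mul_sum (hq : ∀ x : R, ↑q * x = x * ↑q) {m : ℕ} (a : ℕ) (x : R)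
    (f : Fin m → ℕ) (g : Fin m → R) :
    ε ^ a * (x * ∑ e, ε ^ f e * g e) = ∑ e, ε ^ (a + f e) * (x * g e) := by
  simp only [Finset.mul_sum, pow_add, mul_assoc, (commute_negInv_pow q hq _ x).left_comm]

lemma sum_negInv_pow_mul_eq_zero {γ : Type*} [LinearOrder γ] (U : Finset γ) (T : γ → γ → R)
    (hT : ∀ k ∈ U, ∀ k' ∈ U, k < k' → T k k' + ε * T k' k = 0) :
    ∑ k ∈ U, ∑ k' ∈ U.erase k, ε ^ (#{u ∈ U | u < k} + #{u ∈ U.erase k | u < k'}) * T k k'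
      = 0 := by
  refine U.sum_sum_erase_eq_zero_of_antisymm _ fun k hk k' hk' hlt => ?_
  rw [Finset.card_filter_lt_add_card_filter_erase_lt hk hlt, pow_succ, mul_assoc, ← mul_add,
    hT k hk k' hk' hlt, mul_zero]

lemma detq_zero (A : Fin 0 → Fin 0 → R) : detq q A = 1 := by
  simp [detq, inversions]

lemma detq_succ_column_zero (hq : ∀ x : R, ↑q * x = x * ↑q) {p : ℕ}
    (A : Fin (p + 1) → Fin (p + 1) → R) :
    detq q A = ∑ k : Fin (p + 1),
      ε ^ (k : ℕ) * (A k 0 * detq q (fun s t => A (k.succAbove s) t.succ)) := by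
  rw [detq, ← Fintype.sum_bijective _ (consSuccAbove_bijective p) _ _ fun _ => rfl,
    Fintype.sum_prod_type]
  refine Finset.sum_congr rfl fun k _ => ?_
  rw [detq, Finset.mul_sum, Finset.mul_sum]
  refine Finset.sum_congr rfl fun τ _ => ?_
  simp only [inversions_consSuccAbove, List.ofFn_succ, List.prod_cons, consSuccAbove_zero,
    consSuccAbove_succ]
  rw [pow_add, mul_assoc, (commute_negInv_pow q hq _ (A k 0)).left_comm]

variable {n : ℕ} (X : Fin n → Fin n → R)

/-- The coefficient of `θ_U` in `ρ_{l₁} ⋯ ρ_{lₘ}`, where `ρᵢ = Σₖ Xᵢₖ θₖ` and the `θₖ` satisfy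
`θₖ² = 0` and `θₖ θᵤ = (-q)⁻¹ θᵤ θₖ` for `u < k`. -/
noncomputable def rowDetq : List (Fin n) → Finset (Fin n) → R
  | [], U => if U = ∅ then 1 else 0
  | i :: l, U => ∑ k ∈ U, ε ^ #{u ∈ U | u < k} * (X i k * rowDetq l (U.erase k))

lemma rowDetq_cons_cons (hq : ∀ x : R, ↑q * x = x * ↑q) (x y : Fin n) (l : List (Fin n))
    (U : Finset (Fin n)) :
    rowDetq q X (x :: y :: l) U = ∑ k ∈ U, ∑ k' ∈ U.erase k,
      ε ^ (#{u ∈ U | u < k} + #{u ∈ U.erase k | u < k'}) *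
        (X x k * (X y k' * rowDetq q X l ((U.erase k).erase k'))) := by
  simp only [rowDetq, Finset.mul_sum]
  refine Finset.sum_congr rfl fun k _ => Finset.sum_congr rfl fun k' _ => ?_
  rw [← (commute_negInv_pow q hq _ (X x k)).left_comm, pow_add, mul_assoc]

lemma rowDetq_cons_self_cons (hq : ∀ x : R, ↑q * x = x * ↑q) (i : Fin n)
    (hi : ∀ k l, k < l → X i l * X i k = q * (X i k * X i l)) (l : List (Fin n))
    (U : Finset (Fin n)) : rowDetq q X (i :: i :: l) U = 0 := by
  rw [rowDetq_cons_cons q X hq]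
  refine sum_negInv_pow_mul_eq_zero q U _ fun k _ k' _ hlt => ?_
  rw [Finset.erase_right_comm, ← mul_assoc (X i k'), hi k k' hlt, mul_assoc, mul_assoc,
    negInv_mul_mul, add_neg_cancel]

lemma rowDetq_cons_swap (hq : ∀ x : R, ↑q * x = x * ↑q) (hX : IsQGeneric q X) {i j : Fin n}
    (hij : i < j) (l : List (Fin n)) (U : Finset (Fin n)) :
    rowDetq q X (j :: i :: l) U = ε * rowDetq q X (i :: j :: l) U := by
  have hε : ε * ((q : R) - ↑q⁻¹) = ε ^ 2 - 1 := by
    rw [show (↑q⁻¹ : R) = -ε by rw [inv_neg, Units.val_neg, neg_neg], sub_neg_eq_add, mul_add,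
      ← mul_one (q : R), negInv_mul_mul, sq, neg_add_eq_sub]
  rw [← sub_eq_zero, rowDetq_cons_cons q X hq, rowDetq_cons_cons q X hq]
  simp only [Finset.mul_sum, (Commute.self_pow ε _).left_comm, ← Finset.sum_sub_distrib,
    ← mul_sub]
  refine sum_negInv_pow_mul_eq_zero q U _ fun k _ k' _ hlt => ?_
  rw [Finset.erase_right_comm, ← mul_assoc (X j k), hX.2.2.1 i j k k' hij hlt,
    ← mul_assoc (X j k'), hX.2.2.2 i j k k' hij hlt]
  simp only [add_mul, mul_add, mul_sub, mul_assoc]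
  rw [← mul_assoc ε ((q : R) - _), hε]
  noncomm_ring

lemma rowDetq_cons_eq_zero (x : Fin n) {l : List (Fin n)} (h : ∀ V, rowDetq q X l V = 0)
    (U : Finset (Fin n)) : rowDetq q X (x :: l) U = 0 :=
  Finset.sum_eq_zero fun k _ => by rw [h, mul_zero, mul_zero]

lemma rowDetq_cons_eq_negInv_pow_mul (hq : ∀ x : R, ↑q * x = x * ↑q) (x : Fin n)
    {l l' : List (Fin n)} (m : ℕ) (h : ∀ V, rowDetq q X l V = ε ^ m * rowDetq q X l' V)
    (U : Finset (Fin n)) : rowDetq q X (x :: l) U = ε ^ m * rowDetq q X (x :: l') U := by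
  simp only [rowDetq, h, Finset.mul_sum]
  refine Finset.sum_congr rfl fun k _ => ?_
  rw [← (commute_negInv_pow q hq m _).left_comm, ← (commute_negInv_pow q hq m _).left_comm]

lemma rowDetq_cons_eq_zero_of_mem (hq : ∀ x : R, ↑q * x = x * ↑q) (hX : IsQGeneric q X)
    {i : Fin n} {l : List (Fin n)} (hil : i ∈ l) (U : Finset (Fin n)) :
    rowDetq q X (i :: l) U = 0 := by
  induction l generalizing U with
  | nil => simp at hil
  | cons j l ih =>
    obtain rfl | hij := eq_or_ne i j
    · exact rowDetq_cons_self_cons q X hq i (hX.1 i) l U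
    have hjil : ∀ V, rowDetq q X (j :: i :: l) V = 0 :=
      rowDetq_cons_eq_zero q X j (ih ((List.mem_cons.mp hil).resolve_left hij))
    rcases hij.lt_or_gt with hlt | hgt
    · have := rowDetq_cons_swap q X hq hX hlt l U
      rwa [hjil, eq_comm, Units.mul_right_eq_zero] at this
    · rw [rowDetq_cons_swap q X hq hX hgt, hjil, mul_zero]

lemma rowDetq_cons_succAbove (hq : ∀ x : R, ↑q * x = x * ↑q) (hX : IsQGeneric q X) {d : ℕ}
    (r : Fin (d + 1) → Fin n) (hr : StrictMono r) (a : Fin (d + 1)) (U : Finset (Fin n)) :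
    rowDetq q X (r a :: List.ofFn (r ∘ a.succAbove)) U
      = ε ^ (a : ℕ) * rowDetq q X (List.ofFn r) U := by
  induction d generalizing U with
  | zero => simp [Fin.fin_one_eq_zero a, List.ofFn_succ]
  | succ d ih =>
    rw [List.ofFn_succ (f := r)]
    induction a using Fin.cases with
    | zero => simp [Fin.succAbove_zero]
    | succ a =>
      have htail : List.ofFn (r ∘ a.succ.succAbove)
          = r 0 :: List.ofFn ((r ∘ Fin.succ) ∘ a.succAbove) := by
        simp only [List.ofFn_succ, Function.comp_apply, Fin.succ_succAbove_zero,
          Fin.succ_succAbove_succ]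
        rfl
      have ih' := ih (r ∘ Fin.succ) (hr.comp Fin.strictMono_succ) a
      rw [Function.comp_apply] at ih'
      rw [htail, rowDetq_cons_swap q X hq hX (hr (Fin.succ_pos a)),
        rowDetq_cons_eq_negInv_pow_mul q X hq _ _ ih', ← mul_assoc, ← pow_succ', Fin.val_succ]
      rfl

lemma rowDetq_cons_image (i : Fin n) (l : List (Fin n)) {p : ℕ} {h : Fin (p + 1) → Fin n}
    (hh : StrictMono h) :
    rowDetq q X (i :: l) (univ.image h) = ∑ e : Fin (p + 1),
      ε ^ (e : ℕ) * (X i (h e) * rowDetq q X l (univ.image (h ∘ e.succAbove))) := by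
  rw [rowDetq, Finset.sum_image fun x _ y _ hxy => hh.injective hxy]
  refine Finset.sum_congr rfl fun e _ => ?_
  rw [card_filter_lt_image_univ hh, erase_image_univ hh]

lemma rowDetq_ofFn_image (hq : ∀ x : R, ↑q * x = x * ↑q) {p : ℕ} (g : Fin p → Fin n)
    {h : Fin p → Fin n} (hh : StrictMono h) :
    rowDetq q X (List.ofFn g) (univ.image h) = detq q (fun k l => X (g l) (h k)) := by
  induction p with
  | zero => simp [rowDetq, detq_zero]
  | succ p ih =>
    rw [List.ofFn_succ, rowDetq_cons_image q X _ _ hh, detq_succ_column_zero q hq]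
    refine Finset.sum_congr rfl fun e _ => ?_
    rw [ih _ (hh.comp (Fin.strictMono_succAbove e))]
    rfl

def MinorsTransposeInvariant (p : ℕ) : Prop :=
  ∀ r c : Fin p → Fin n, StrictMono r → StrictMono c →
    detq q (fun k l => X (r k) (c l)) = detq q (fun k l => X (r l) (c k))

lemma minorsTransposeInvariant_succ_succ (hq : ∀ x : R, ↑q * x = x * ↑q) (hX : IsQGeneric q X)
    {p : ℕ} (ih₀ : MinorsTransposeInvariant q X p) (ih₁ : MinorsTransposeInvariant q X (p + 1))
    (r c : Fin (p + 2) → Fin n) (hr : StrictMono r) (hc : StrictMono c) :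
    detq q (fun k l => X (r k) (c l)) = detq q (fun k l => X (r l) (c k)) := by
  set M : Fin (p + 1) → Fin (p + 1) → R := fun k e =>
    detq q (fun s t => X (r (k.succAbove s).succ) (c (e.succAbove t).succ)) with hM
  have hcol : ∀ k : Fin (p + 1), detq q (fun s t => X (r (k.succ.succAbove s)) (c t.succ))
      = ∑ e : Fin (p + 1), ε ^ (e : ℕ) * (X (r 0) (c e.succ) * M k e) := by
    intro k
    rw [ih₁ (fun s => r (k.succ.succAbove s)) (fun t => c t.succ)
      (hr.comp (Fin.strictMono_succAbove _)) (hc.comp Fin.strictMono_succ),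
      detq_succ_column_zero q hq]
    refine Finset.sum_congr rfl fun e _ => ?_
    simp only [hM, Fin.succ_succAbove_zero]
    rw [ih₀ (fun s => r (k.succAbove s).succ) (fun t => c (e.succAbove t).succ)
      (hr.comp (Fin.strictMono_succ.comp (Fin.strictMono_succAbove k)))
      (hc.comp (Fin.strictMono_succ.comp (Fin.strictMono_succAbove e)))]
    simp [Fin.succ_succAbove_succ]
  have hrow : ∀ e : Fin (p + 1), detq q (fun s t => X (r t.succ) (c (e.succ.succAbove s)))
      = ∑ k : Fin (p + 1), ε ^ (k : ℕ) * (X (r k.succ) (c 0) * M k e) := by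
    intro e
    rw [← ih₁ (fun s => r s.succ) (fun t => c (e.succ.succAbove t))
      (hr.comp Fin.strictMono_succ) (hc.comp (Fin.strictMono_succAbove _)),
      detq_succ_column_zero q hq]
    simp [hM, Fin.succ_succAbove_succ]
  rw [detq_succ_column_zero q hq, detq_succ_column_zero q hq, Fin.sum_univ_succ (n := p + 1),
    Fin.sum_univ_succ (n := p + 1)]
  congr 1
  · simp only [Fin.val_zero, pow_zero, one_mul, Fin.succAbove_zero]
    rw [ih₁ (fun s => r s.succ) (fun t => c t.succ) (hr.comp Fin.strictMono_succ)
      (hc.comp Fin.strictMono_succ)]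
  · simp only [hcol, hrow, negInv_pow_mul_mul_sum q hq]
    rw [Finset.sum_comm]
    refine Finset.sum_congr rfl fun e _ => Finset.sum_congr rfl fun k _ => ?_
    rw [← mul_assoc (X (r k.succ) (c 0)),
      hX.2.2.1 _ _ _ _ (hr (Fin.succ_pos k)) (hc (Fin.succ_pos e)), mul_assoc]
    congr 2
    simp only [Fin.val_succ]
    omega

lemma minorsTransposeInvariant (hq : ∀ x : R, ↑q * x = x * ↑q) (hX : IsQGeneric q X)
    (p : ℕ) : MinorsTransposeInvariant q X p := by
  induction p using Nat.twoStepInduction with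
  | zero => intro r c _ _; congr 1; funext k; exact k.elim0
  | one => intro r c _ _; congr 1; funext k l; rw [Subsingleton.elim k l]
  | more p ih₀ ih₁ => exact minorsTransposeInvariant_succ_succ q X hq hX ih₀ ih₁

lemma sum_negInv_pow_mul_detq_succAbove (hq : ∀ x : R, ↑q * x = x * ↑q) (hX : IsQGeneric q X)
    {d : ℕ} (r c : Fin (d + 1) → Fin n) (hr : StrictMono r) (hc : StrictMono c)
    (a b : Fin (d + 1)) :
    ∑ e : Fin (d + 1), ε ^ (e : ℕ) *
        (X (r b) (c e) * detq q (fun k l => X (r (a.succAbove k)) (c (e.succAbove l))))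
      = (if a = b then ε ^ (a : ℕ) else 0) * detq q (fun k l => X (r k) (c l)) := by
  have hminor : ∀ e : Fin (d + 1), detq q (fun k l => X (r (a.succAbove k)) (c (e.succAbove l)))
      = rowDetq q X (List.ofFn (r ∘ a.succAbove)) (univ.image (c ∘ e.succAbove)) := fun e => by
    rw [rowDetq_ofFn_image q X hq _ (hc.comp (Fin.strictMono_succAbove e)),
      minorsTransposeInvariant q X hq hX d (fun k => r (a.succAbove k))
        (fun l => c (e.succAbove l)) (hr.comp (Fin.strictMono_succAbove a))
        (hc.comp (Fin.strictMono_succAbove e))]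
    rfl
  simp only [hminor]
  rw [← rowDetq_cons_image q X _ _ hc]
  split_ifs with hab
  · rw [hab, rowDetq_cons_succAbove q X hq hX r hr b, rowDetq_ofFn_image q X hq r hc,
      minorsTransposeInvariant q X hq hX _ r c hr hc]
  · rw [rowDetq_cons_eq_zero_of_mem q X hq hX, zero_mul]
    obtain ⟨t, ht⟩ := Fin.exists_succAbove_eq (Ne.symm hab)
    exact List.mem_ofFn.mpr ⟨t, by simp [ht]⟩

end Ring

/-- Quantum Laplace expansion with an alien row: for a `(d+1)×(d+1)` submatrix
`A = X_{R,C}` of a `q`-generic matrix `X`, rows `i = r a`, `j = r b` of `R`,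
`Σ_{c ∈ C} A_{j,c} · (−q)^{pos_R(i) − pos_C(c)} · det_q A^{i,c} = δ_{ij} det_q A`. -/
theorem stmt_5 {R : Type*} [Ring R] (q : Rˣ) (hq : ∀ x : R, ↑q * x = x * ↑q)
    {n d : ℕ} (X : Fin n → Fin n → R) (hX : IsQGeneric q X)
    (r c : Fin (d + 1) → Fin n) (hr : StrictMono r) (hc : StrictMono c)
    (a b : Fin (d + 1)) :
    ∑ e : Fin (d + 1),
        X (r b) (c e) *
          ((((-q) ^ ((a : ℤ) - (e : ℤ)) : Rˣ) : R) *
            detq q (fun k l => X (r (a.succAbove k)) (c (e.succAbove l))))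
      = (if r a = r b then (1 : R) else 0) * detq q (fun k l => X (r k) (c l)) := by
  have hpow : ∀ e : Fin (d + 1), (((-q) ^ ((a : ℤ) - (e : ℤ)) : Rˣ) : R)
      = (((-q) ^ (a : ℕ) : Rˣ) : R) * (((-q)⁻¹ : Rˣ) : R) ^ (e : ℕ) := fun e => by
    rw [zpow_sub, zpow_natCast, zpow_natCast, ← inv_pow, Units.val_mul,
      Units.val_pow_eq_pow_val (-q)⁻¹]
  have hcomm : ∀ x : R, Commute (((-q) ^ (a : ℕ) : Rˣ) : R) x := fun x => by
    rw [Units.val_pow_eq_pow_val, Units.val_neg]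
    exact (Commute.neg_left (hq x)).pow_left _
  calc _ = (((-q) ^ (a : ℕ) : Rˣ) : R) * ∑ e : Fin (d + 1), (((-q)⁻¹ : Rˣ) : R) ^ (e : ℕ) *
        (X (r b) (c e) * detq q (fun k l => X (r (a.succAbove k)) (c (e.succAbove l)))) := by
        rw [Finset.mul_sum]
        refine Finset.sum_congr rfl fun e _ => ?_
        rw [hpow, mul_assoc, ← (hcomm _).left_comm, ← (commute_negInv_pow q hq _ _).left_comm]
    _ = _ := by
      rw [sum_negInv_pow_mul_detq_succAbove q X hq hX r c hr hc, ← mul_assoc]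
      by_cases hab : a = b
      · rw [if_pos hab, if_pos (congrArg r hab), ← Units.val_pow_eq_pow_val, ← Units.val_mul,
          inv_pow, mul_inv_cancel, Units.val_one]
      · rw [if_neg hab, if_neg (hr.injective.ne hab), mul_zero]
end

section
/- Base case of q-commuting minors: let X be an n×n q-generic matrix, I ⊆ {1,…,n}, and j ∈ {1,…,n}\I such that {j} surrounds I (i.e., either j < min I or j > max I). Then the single entry x_{j,1} and the quantum minor det_q X_{I,[|I|]} satisfy x_{j,1} · [I] = q^{ε} · [I] · x_{j,1}, where [I] = det_q X_{I,[|I|]} and ε = 1 if j > max I and ε = −1 if j < min I. -/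
/-!
Every monomial `x_{σ(1),1} ⋯ x_{σ(d),d}` of `[I]` contains exactly one entry of the first
column. If `j` lies below `I`, then `x_{j,1}` commutes with every other entry of the monomial
and `q`-commutes with that one. If `j` lies above `I`, moving `x_{j,1}` past an entry `x_{i,l}`
with `l > 1` produces, by the fourth `q`-generic relation, an error term in which column `l` is
replaced by column `1`; summed over `σ`, these error terms are quantum minors with a repeated
column. Such minors vanish: two equal adjacent columns cancel by pairing `σ` with
`σ * swap u (u + 1)`, and for `c (u + 1) < c u` the same pairing gives
`det_q (a ∘ c) = (-q)⁻¹ det_q (a ∘ c ∘ swap u (u + 1))`, which moves a repeated column next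
to its twin.
-/

open Finset Equiv

section

variable {R : Type*} [Ring R] {q : Rˣ}

lemma one_add_neg_inv_mul_self : 1 + (((-q)⁻¹ : Rˣ) : R) * q = 0 := by
  rw [← Units.val_mul, inv_neg, neg_mul, inv_mul_cancel, Units.val_neg, Units.val_one,
    add_neg_cancel]

lemma sub_inv_eq_add_neg_inv : (q : R) - ↑q⁻¹ = q + (((-q)⁻¹ : Rˣ) : R) := by
  rw [inv_neg, Units.val_neg, sub_eq_add_neg]

lemma commute_neg_inv_pow (hq : ∀ x : R, Commute (q : R) x) (k : ℕ) (x : R) :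
    Commute ((((-q)⁻¹ : Rˣ) : R) ^ k) x := by
  refine Commute.pow_left (Commute.units_inv_left ?_) k
  rw [Units.val_neg]
  exact (hq x).neg_left

lemma IsQGeneric.submatrix {m n : ℕ} {X : Fin n → Fin n → R} (hX : IsQGeneric q X)
    {r s : Fin m → Fin n} (hr : StrictMono r) (hs : StrictMono s) :
    IsQGeneric q (fun k l => X (r k) (s l)) :=
  ⟨fun i _ _ hkl => hX.1 (r i) _ _ (hs hkl),
   fun _ _ _ hij => hX.2.1 _ _ _ (hr hij),
   fun _ _ _ _ hij hkl => hX.2.2.1 _ _ _ _ (hr hij) (hs hkl),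
   fun _ _ _ _ hij hkl => hX.2.2.2 _ _ _ _ (hr hij) (hs hkl)⟩

end

lemma swap_lt_swap_of_lt {d : ℕ} {u v : Fin d} (huv : (v : ℕ) = u + 1)
    {a b : Fin d} (hab : a < b) (hne : ¬(a = u ∧ b = v)) :
    swap u v a < swap u v b := by
  rw [swap_apply_def, swap_apply_def]
  simp only [Fin.lt_def, Fin.ext_iff, not_and] at *
  split_ifs <;> omega

lemma inversions_mul_swap {d : ℕ} (σ : Perm (Fin d)) {u v : Fin d}
    (huv : (v : ℕ) = u + 1) (h : σ u < σ v) :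
    inversions (σ * swap u v) = inversions σ + 1 := by
  have huv' : u < v := by rw [Fin.lt_def]; omega
  let e : Fin d × Fin d ≃ Fin d × Fin d := (swap u v).prodCongr (swap u v)
  have key : univ.filter
        (fun p : Fin d × Fin d => p.1 < p.2 ∧ (σ * swap u v) p.2 < (σ * swap u v) p.1)
      = insert (u, v) ((univ.filter fun p : Fin d × Fin d => p.1 < p.2 ∧ σ p.2 < σ p.1).map
          e.toEmbedding) := by
    ext ⟨a, b⟩
    simp only [Finset.mem_filter, Finset.mem_univ, true_and, mem_insert, mem_map_equiv]
    simp only [e, Prod.mk.injEq, Perm.mul_apply, prodCongr_symm, prodCongr_apply, symm_swap,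
      Prod.map]
    constructor
    · rintro ⟨hab, hσ⟩
      by_cases hp : a = u ∧ b = v
      · exact Or.inl hp
      · exact Or.inr ⟨swap_lt_swap_of_lt huv hab hp, hσ⟩
    · rintro (⟨rfl, rfl⟩ | ⟨hab, hσ⟩)
      · simpa [huv'] using h
      · refine ⟨?_, hσ⟩
        simpa using swap_lt_swap_of_lt huv hab fun ⟨ha, hb⟩ => by
          rw [ha, hb] at hσ
          exact lt_asymm h hσ
  rw [inversions, inversions, key, card_insert_of_notMem, card_map]
  simp [e, huv'.not_gt]

lemma sum_perm_eq_sum_add_mul_swap {M : Type*} [AddCommMonoid M] {d : ℕ} {u v : Fin d}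
    (huv : u ≠ v) (F : Perm (Fin d) → M) :
    ∑ σ, F σ =
      ∑ σ ∈ univ.filter (fun σ : Perm (Fin d) => σ u < σ v),
        (F σ + F (σ * swap u v)) := by
  rw [sum_add_distrib,
    ← sum_filter_add_sum_filter_not univ (fun σ : Perm (Fin d) => σ u < σ v)]
  congr 1
  refine sum_equiv (Equiv.mulRight (swap u v)) (fun σ => ?_) (fun σ _ => ?_)
  · simp only [Finset.mem_filter, Finset.mem_univ, true_and, coe_mulRight, Perm.mul_apply,
      swap_apply_left, swap_apply_right, not_lt]
    exact ⟨fun h => h.lt_of_ne (σ.injective.ne huv.symm), le_of_lt⟩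
  · simp [mul_assoc]

lemma exists_prod_ofFn_eq_mul_mul {M : Type*} [Monoid M] {d : ℕ} (f : Fin d → M)
    {u v : Fin d} (huv : (v : ℕ) = u + 1) :
    ∃ L N : M, ∀ g : Fin d → M, (∀ i, i ≠ u → i ≠ v → g i = f i) →
      (List.ofFn g).prod = L * (g u * g v) * N := by
  refine ⟨((List.ofFn f).take u).prod, ((List.ofFn f).drop (u + 2)).prod, fun g hg => ?_⟩
  have hvd := v.isLt
  have hgf : ∀ i (hi : i < d), i ≠ u → i ≠ v → g ⟨i, hi⟩ = f ⟨i, hi⟩ :=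
    fun _ _ hiu hiv => hg _ (Fin.ne_of_val_ne hiu) (Fin.ne_of_val_ne hiv)
  have htake : (List.ofFn g).take u = (List.ofFn f).take u :=
    List.ext_getElem (by simp) fun i hi _ => by
      simp only [List.getElem_take, List.getElem_ofFn]
      simp only [List.length_take, List.length_ofFn] at hi
      exact hgf i _ (by omega) (by omega)
  have hdrop : (List.ofFn g).drop (u + 2) = (List.ofFn f).drop (u + 2) :=
    List.ext_getElem (by simp) fun i hi _ => by
      simp only [List.getElem_drop, List.getElem_ofFn]
      exact hgf _ _ (by omega) (by omega)
  conv_lhs => rw [← List.take_append_drop u (List.ofFn g),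
    List.drop_eq_getElem_cons (by simp only [List.length_ofFn]; omega),
    List.drop_eq_getElem_cons (by simp only [List.length_ofFn]; omega)]
  have hv' : (⟨u + 1, by omega⟩ : Fin d) = v := Fin.ext huv.symm
  simp [htake, hdrop, hv', List.prod_append, mul_assoc]

section QDet

variable {R : Type*} [Ring R] {q : Rˣ} {d : ℕ} (a : Fin d → Fin d → R)

lemma detq_comp_eq_sum_filter (c : Fin d → Fin d) {u v : Fin d} (huv : (v : ℕ) = u + 1) :
    detq q (fun k l => a k (c l)) = ∑ σ ∈ univ.filter (fun σ : Perm (Fin d) => σ u < σ v),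
      ((((-q)⁻¹ : Rˣ) : R) ^ inversions σ * (List.ofFn fun i => a (σ i) (c i)).prod +
        (((-q)⁻¹ : Rˣ) : R) ^ (inversions σ + 1) *
          (List.ofFn fun i => a ((σ * swap u v) i) (c i)).prod) := by
  rw [detq, sum_perm_eq_sum_add_mul_swap (u := u) (v := v)
    (Fin.ne_of_lt (by rw [Fin.lt_def]; omega))]
  refine sum_congr rfl fun σ hσ => ?_
  rw [inversions_mul_swap σ huv (Finset.mem_filter.mp hσ).2]

lemma detq_comp_eq_zero_of_adjacent (hq : ∀ x : R, Commute (q : R) x) (hA : IsQGeneric q a)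
    (c : Fin d → Fin d) {u v : Fin d} (huv : (v : ℕ) = u + 1) (hc : c u = c v) :
    detq q (fun k l => a k (c l)) = 0 := by
  rw [detq_comp_eq_sum_filter a c huv]
  refine sum_eq_zero fun σ hσ => ?_
  obtain ⟨L, N, hLN⟩ := exists_prod_ofFn_eq_mul_mul (fun i => a (σ i) (c i)) huv
  have hswap : (List.ofFn fun i => a ((σ * swap u v) i) (c i)).prod =
      q * (List.ofFn fun i => a (σ i) (c i)).prod := by
    rw [hLN _ fun _ _ _ => rfl, hLN _ fun i hu hv => by simp [swap_apply_of_ne_of_ne hu hv]]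
    simp only [Perm.mul_apply, swap_apply_left, swap_apply_right, ← hc]
    rw [hA.2.1 _ _ _ (Finset.mem_filter.mp hσ).2, ← mul_assoc L, ← (hq L).eq]
    simp only [mul_assoc]
  rw [hswap]
  calc _ = (((-q)⁻¹ : Rˣ) : R) ^ inversions σ * (1 + (((-q)⁻¹ : Rˣ) : R) * q) *
        (List.ofFn fun i => a (σ i) (c i)).prod := by noncomm_ring
    _ = 0 := by rw [one_add_neg_inv_mul_self, mul_zero, zero_mul]

lemma detq_comp_eq_neg_inv_mul_of_adjacent (hq : ∀ x : R, Commute (q : R) x)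
    (hA : IsQGeneric q a) (c : Fin d → Fin d) {u v : Fin d} (huv : (v : ℕ) = u + 1)
    (hc : c v < c u) :
    detq q (fun k l => a k (c l)) =
      (((-q)⁻¹ : Rˣ) : R) * detq q (fun k l => a k (c (swap u v l))) := by
  rw [← sub_eq_zero, detq_comp_eq_sum_filter a c huv, detq_comp_eq_sum_filter a _ huv, mul_sum,
    ← sum_sub_distrib]
  refine sum_eq_zero fun σ hσ => ?_
  have hσuv : σ u < σ v := (Finset.mem_filter.mp hσ).2
  obtain ⟨L, N, hLN⟩ := exists_prod_ofFn_eq_mul_mul (fun i => a (σ i) (c i)) huv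
  have hLN' : ∀ τ : Perm (Fin d), (τ = σ ∨ τ = σ * swap u v) → ∀ c' : Fin d → Fin d,
      (c' = c ∨ c' = fun i => c (swap u v i)) →
      (List.ofFn fun i => a (τ i) (c' i)).prod = L * (a (τ u) (c' u) * a (τ v) (c' v)) * N := by
    rintro τ hτ c' hc'
    refine hLN _ fun i hu hv => ?_
    rcases hτ with rfl | rfl <;> rcases hc' with rfl | rfl <;>
      simp [swap_apply_of_ne_of_ne hu hv]
  set X₁ := L * (a (σ u) (c u) * a (σ v) (c v)) * N
  set X₃ := L * (a (σ u) (c v) * a (σ v) (c u)) * N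
  have h₂ : (List.ofFn fun i => a ((σ * swap u v) i) (c i)).prod =
      X₃ + (q + ((-q)⁻¹ : Rˣ)) * X₁ := by
    rw [hLN' _ (.inr rfl) _ (.inl rfl)]
    simp only [Perm.mul_apply, swap_apply_left, swap_apply_right]
    rw [hA.2.2.2 _ _ _ _ hσuv hc, sub_inv_eq_add_neg_inv, mul_add, add_mul]
    congr 1
    rw [← mul_assoc L, ← ((hq L).add_left (by simpa using commute_neg_inv_pow hq 1 L)).eq]
    simp only [X₁, mul_assoc]
  have h₄ : (List.ofFn fun i => a ((σ * swap u v) i) (c (swap u v i))).prod = X₁ := by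
    rw [hLN' _ (.inr rfl) _ (.inr rfl)]
    simp only [Perm.mul_apply, swap_apply_left, swap_apply_right]
    rw [hA.2.2.1 _ _ _ _ hσuv hc]
  have h₁ : (List.ofFn fun i => a (σ i) (c i)).prod = X₁ := hLN' _ (.inl rfl) _ (.inl rfl)
  have h₃ : (List.ofFn fun i => a (σ i) (c (swap u v i))).prod = X₃ := by
    rw [hLN' _ (.inl rfl) _ (.inr rfl), swap_apply_left, swap_apply_right]
  clear_value X₁ X₃
  rw [h₁, h₂, h₃, h₄]
  set κ : R := (((-q)⁻¹ : Rˣ) : R)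
  calc _ = κ ^ inversions σ * (1 + κ * q) * X₁ := by
        simp only [pow_succ, mul_add, add_mul, ← mul_assoc, (Commute.self_pow κ _).eq, mul_one]
        abel
    _ = 0 := by rw [one_add_neg_inv_mul_self, mul_zero, zero_mul]

lemma detq_comp_eq_zero_of_eq (hq : ∀ x : R, Commute (q : R) x) (hA : IsQGeneric q a)
    {u w : Fin d} (huw : u < w) (c : Fin d → Fin d) (hc : c u = c w)
    (hbetween : ∀ i, u < i → i < w → c w < c i) :
    detq q (fun k l => a k (c l)) = 0 := by
  obtain ⟨n, hn⟩ : ∃ n, (w : ℕ) = u + 1 + n :=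
    ⟨w - u - 1, by rw [Fin.lt_def] at huw; omega⟩
  induction n generalizing w c with
  | zero => exact detq_comp_eq_zero_of_adjacent a hq hA c hn hc
  | succ n ih =>
    let v : Fin d := ⟨u + 1 + n, by omega⟩
    have hvw : (w : ℕ) = v + 1 := by simp only [v]; omega
    have huv : u < v := by rw [Fin.lt_def]; simp only [v]; omega
    have hvw' : v < w := by rw [Fin.lt_def]; omega
    rw [detq_comp_eq_neg_inv_mul_of_adjacent a hq hA c hvw (hbetween v huv hvw'),
      ih huv _ ?_ (fun i hui hiv => ?_) rfl, mul_zero]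
    · rw [swap_apply_of_ne_of_ne huv.ne (huv.trans hvw').ne, swap_apply_left, hc]
    · rw [swap_apply_left, swap_apply_of_ne_of_ne hiv.ne (hiv.trans hvw').ne]
      exact hbetween i hui (hiv.trans hvw')

end QDet

lemma mul_prod_ofFn_eq_sub_sum {R : Type*} [Ring R] {x c : R} (hc : ∀ z, Commute c z) :
    ∀ {e : ℕ} (f y z : Fin e → R), (∀ t, x * f t = f t * x - c * (y t * z t)) →
      (∀ s t, s < t → Commute (f s) (y t)) →
      x * (List.ofFn f).prod = (List.ofFn f).prod * x -
        c * ∑ t, y t * (List.ofFn (Function.update f t (z t))).prod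
  | 0, _, _, _, _, _ => by simp
  | e + 1, f, y, z, hx, hy => by
    have ih := mul_prod_ofFn_eq_sub_sum hc (fun i => f i.succ) (fun i => y i.succ)
      (fun i => z i.succ) (fun t => hx t.succ) fun s t hst => hy _ _ (Fin.succ_lt_succ_iff.2 hst)
    have hupdate : ∀ t : Fin e, (List.ofFn (Function.update f t.succ (z t.succ))).prod =
        f 0 * (List.ofFn (Function.update (fun i => f i.succ) t (z t.succ))).prod := by
      intro t
      rw [List.ofFn_succ, List.prod_cons, Function.update_of_ne (Fin.succ_ne_zero t).symm]
      congr 3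
      funext i
      simp only [Function.update_apply, Fin.succ_inj]
    have hupdate₀ : (List.ofFn (Function.update f 0 (z 0))).prod =
        z 0 * (List.ofFn fun i => f i.succ).prod := by
      rw [List.ofFn_succ, List.prod_cons, Function.update_self]
      congr 3
    rw [List.ofFn_succ, List.prod_cons, Fin.sum_univ_succ, hupdate₀]
    simp only [hupdate]
    have hsum : f 0 * ∑ t : Fin e, y t.succ *
          (List.ofFn (Function.update (fun i => f i.succ) t (z t.succ))).prod =
        ∑ t : Fin e, y t.succ *
          (f 0 * (List.ofFn (Function.update (fun i => f i.succ) t (z t.succ))).prod) := by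
      simp only [mul_sum, ← mul_assoc, (hy 0 _ (Fin.succ_pos _)).eq]
    rw [← mul_assoc, hx 0, sub_mul, mul_assoc, ih, mul_sub, ← mul_assoc (f 0) c, ← (hc _).eq,
      mul_assoc c (f 0), hsum]
    simp only [mul_assoc, mul_add]
    abel

namespace IsQGeneric

variable {R : Type*} [Ring R] {q : Rˣ} {n e : ℕ} {X : Fin n → Fin n → R}

theorem mul_detq_of_lt (hq : ∀ x : R, Commute (q : R) x) (hX : IsQGeneric q X)
    {r s : Fin (e + 1) → Fin n} (hs : StrictMono s) {j : Fin n} (hj : ∀ i, r i < j) :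
    X j (s 0) * detq q (fun k l => X (r k) (s l)) =
      q * (detq q (fun k l => X (r k) (s l)) * X j (s 0)) := by
  have hmonomial : ∀ σ : Perm (Fin (e + 1)),
      X j (s 0) * (List.ofFn fun i => X (r (σ i)) (s i)).prod =
        q * ((List.ofFn fun i => X (r (σ i)) (s i)).prod * X j (s 0)) := by
    intro σ
    have htail :
        Commute (X j (s 0)) (List.ofFn fun i : Fin e => X (r (σ i.succ)) (s i.succ)).prod :=
      Commute.list_prod_right _ _ fun _ hw => by
        obtain ⟨i, rfl⟩ := List.mem_ofFn.mp hw
        exact hX.2.2.1 _ _ _ _ (hj _) (hs (Fin.succ_pos i))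
    rw [List.ofFn_succ, List.prod_cons, ← mul_assoc, hX.2.1 _ _ _ (hj _), mul_assoc, mul_assoc,
      htail.eq, mul_assoc]
  rw [detq, mul_sum, sum_mul, mul_sum]
  refine sum_congr rfl fun σ _ => ?_
  rw [← mul_assoc, ← (commute_neg_inv_pow hq _ _).eq, mul_assoc, hmonomial, ← mul_assoc,
    (commute_neg_inv_pow hq _ _).eq, mul_assoc, mul_assoc]

lemma mul_prod_ofFn_of_gt (hq : ∀ x : R, Commute (q : R) x) (hX : IsQGeneric q X)
    {r s : Fin (e + 1) → Fin n} (hs : StrictMono s) {j : Fin n} (hj : ∀ i, j < r i)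
    (σ : Perm (Fin (e + 1))) :
    X j (s 0) * (List.ofFn fun i => X (r (σ i)) (s i)).prod =
      ↑q⁻¹ * ((List.ofFn fun i => X (r (σ i)) (s i)).prod * X j (s 0)) -
        ∑ t : Fin e, ↑q⁻¹ * ((q : R) - ↑q⁻¹) * X j (s t.succ) *
          (List.ofFn fun i => X (r (σ i)) (s (Function.update id t.succ 0 i))).prod := by
  have hc : ∀ z : R, Commute ((q : R) - ↑q⁻¹) z := fun z =>
    (hq z).sub_left (hq z).units_inv_left
  have hpush := mul_prod_ofFn_eq_sub_sum hc (fun i => X (r (σ i.succ)) (s i.succ))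
    (fun i => X j (s i.succ)) (fun i => X (r (σ i.succ)) (s 0))
    (fun t => by rw [hX.2.2.2 _ _ _ _ (hj _) (hs (Fin.succ_pos t)), add_sub_cancel_right])
    (fun _ _ hlt => hX.2.2.1 _ _ _ _ (hj _) (hs (Fin.succ_lt_succ_iff.2 hlt)))
  have hhead : X j (s 0) * X (r (σ 0)) (s 0) = ↑q⁻¹ * (X (r (σ 0)) (s 0) * X j (s 0)) := by
    rw [hX.2.1 _ _ _ (hj _), ← mul_assoc, Units.inv_mul, one_mul]
  have hupdate : ∀ t : Fin e,
      X (r (σ 0)) (s 0) * (List.ofFn (Function.update (fun i => X (r (σ i.succ)) (s i.succ)) t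
        (X (r (σ t.succ)) (s 0)))).prod =
      (List.ofFn fun i => X (r (σ i)) (s (Function.update id t.succ 0 i))).prod := by
    intro t
    rw [List.ofFn_succ (n := e), List.prod_cons, Function.update_of_ne (Fin.succ_ne_zero t).symm]
    congr 3
    funext i
    by_cases hi : i = t
    · subst hi; simp
    · simp [Function.update_of_ne hi, Function.update_of_ne (Fin.succ_injective _ |>.ne hi)]
  rw [List.ofFn_succ, List.prod_cons, ← mul_assoc, hhead, mul_assoc, mul_assoc, hpush, mul_sub,
    mul_sub, mul_assoc, mul_sum, mul_sum]
  congr 1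
  rw [mul_sum]
  refine sum_congr rfl fun t _ => ?_
  rw [← hupdate t, ← mul_assoc (X (r (σ 0)) (s 0)), ← (hc _).eq, mul_assoc,
    ← mul_assoc (X (r (σ 0)) (s 0)), hX.2.2.1 _ _ _ _ (hj _) (hs (Fin.succ_pos t))]
  simp only [mul_assoc]

theorem mul_detq_of_gt (hq : ∀ x : R, Commute (q : R) x) (hX : IsQGeneric q X)
    {r s : Fin (e + 1) → Fin n} (hr : StrictMono r) (hs : StrictMono s) {j : Fin n}
    (hj : ∀ i, j < r i) :
    X j (s 0) * detq q (fun k l => X (r k) (s l)) =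
      ↑q⁻¹ * (detq q (fun k l => X (r k) (s l)) * X j (s 0)) := by
  have hrepeated : ∀ t : Fin e,
      detq q (fun k l => X (r k) (s (Function.update id t.succ 0 l))) = 0 := fun t =>
    detq_comp_eq_zero_of_eq _ hq (hX.submatrix hr hs) (Fin.succ_pos t) _
      (by simp [Function.update_of_ne (Fin.succ_ne_zero t).symm])
      fun i hi hit => by simpa [Function.update_of_ne hit.ne] using hi
  set κ : R := (((-q)⁻¹ : Rˣ) : R)
  calc X j (s 0) * detq q (fun k l => X (r k) (s l))
      = ∑ σ : Perm (Fin (e + 1)), (↑q⁻¹ * (κ ^ inversions σ *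
          (List.ofFn fun i => X (r (σ i)) (s i)).prod * X j (s 0)) -
        ∑ t : Fin e, ↑q⁻¹ * ((q : R) - ↑q⁻¹) * X j (s t.succ) * (κ ^ inversions σ *
          (List.ofFn fun i => X (r (σ i)) (s (Function.update id t.succ 0 i))).prod)) := by
        rw [detq, mul_sum]
        refine sum_congr rfl fun σ _ => ?_
        rw [← mul_assoc, ← (commute_neg_inv_pow hq _ _).eq, mul_assoc,
          mul_prod_ofFn_of_gt hq hX hs hj, mul_sub, mul_sum]
        have hκ := commute_neg_inv_pow hq (inversions σ)
        congr 1
        · rw [← mul_assoc, (hκ _).eq]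
          simp only [mul_assoc, κ]
        · exact sum_congr rfl fun t _ => by rw [← mul_assoc, (hκ _).eq, mul_assoc]
    _ = ↑q⁻¹ * (detq q (fun k l => X (r k) (s l)) * X j (s 0)) -
        ∑ t : Fin e, ↑q⁻¹ * ((q : R) - ↑q⁻¹) * X j (s t.succ) *
          detq q (fun k l => X (r k) (s (Function.update id t.succ 0 l))) := by
        rw [sum_sub_distrib, sum_comm]
        simp only [detq, mul_sum, sum_mul, mul_assoc, κ]
    _ = ↑q⁻¹ * (detq q (fun k l => X (r k) (s l)) * X j (s 0)) := by
        simp only [hrepeated, mul_zero, sum_const_zero, sub_zero]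

end IsQGeneric

theorem stmt_6_general {R : Type*} [Ring R] (q : Rˣ) (hq : ∀ x : R, ↑q * x = x * ↑q)
    {n d : ℕ} (X : Fin n → Fin n → R) (hX : IsQGeneric q X)
    (hd : 0 < d) (hdn : d ≤ n)
    (r : Fin d → Fin n) (hr : StrictMono r)
    (j : Fin n) :
    ((∀ i, r i < j) →
      X j (Fin.castLE hdn ⟨0, hd⟩) * detq q (fun k l => X (r k) (Fin.castLE hdn l))
        = ↑q * (detq q (fun k l => X (r k) (Fin.castLE hdn l)) *
            X j (Fin.castLE hdn ⟨0, hd⟩))) ∧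
    ((∀ i, j < r i) →
      X j (Fin.castLE hdn ⟨0, hd⟩) * detq q (fun k l => X (r k) (Fin.castLE hdn l))
        = ↑q⁻¹ * (detq q (fun k l => X (r k) (Fin.castLE hdn l)) *
            X j (Fin.castLE hdn ⟨0, hd⟩))) := by
  obtain ⟨e, rfl⟩ : ∃ e, d = e + 1 := ⟨d - 1, by omega⟩
  exact ⟨hX.mul_detq_of_lt hq (Fin.strictMono_castLE hdn),
    hX.mul_detq_of_gt hq hr (Fin.strictMono_castLE hdn)⟩

/-- Base case of `q`-commuting minors: if `{j}` surrounds `I` (all of `I` below `j`,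
resp. all of `I` above `j`), then the entry `x_{j,1}` and the quantum minor
`[I] = det_q X_{I,[|I|]}` satisfy `x_{j,1}[I] = q^{±1} [I] x_{j,1}`. -/
theorem stmt_6 {R : Type*} [Ring R] (q : Rˣ) (hq : ∀ x : R, ↑q * x = x * ↑q)
    {n d : ℕ} (X : Fin n → Fin n → R) (hX : IsQGeneric q X)
    (hd : 0 < d) (hdn : d ≤ n)
    (r : Fin d → Fin n) (hr : StrictMono r)
    (j : Fin n) (hj : ∀ i, j ≠ r i) :
    ((∀ i, r i < j) →
      X j (Fin.castLE hdn ⟨0, hd⟩) * detq q (fun k l => X (r k) (Fin.castLE hdn l))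
        = ↑q * (detq q (fun k l => X (r k) (Fin.castLE hdn l)) *
            X j (Fin.castLE hdn ⟨0, hd⟩))) ∧
    ((∀ i, j < r i) →
      X j (Fin.castLE hdn ⟨0, hd⟩) * detq q (fun k l => X (r k) (Fin.castLE hdn l))
        = ↑q⁻¹ * (detq q (fun k l => X (r k) (Fin.castLE hdn l)) *
            X j (Fin.castLE hdn ⟨0, hd⟩))) :=
  stmt_6_general q hq X hX hd hdn r hr j
end

section
/- Edge-weight multiplicativity up to a correction: let J = J' ∪ J'' (disjoint), I disjoint from J, and for subsets A ⊆ B ⊆ J define the weight exponent E(A,B) = −ℓ(J\B, B\A) − ℓ(B\A, A) + (2|J\B| − |I|)·|(B\A) ∩ J'|, where ℓ(S,T) = |{(s,t) ∈ S×T : s > t}|. Then for A ⊆ B ⊆ C ⊆ J, writing B̂ = B\A and Ĉ = C\B: E(A,B) + E(B,C) = E(A,C) + 2ℓ(B̂ ∩ J', Ĉ) − 2ℓ(Ĉ, B̂ ∩ J''). -/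
/-- `linv S T` counts pairs `(s,t) ∈ S × T` with `s > t`. -/
def linv (S T : Finset ℕ) : ℕ := ((S ×ˢ T).filter (fun p => p.2 < p.1)).card

/-- The weight exponent `E(A,B) = −ℓ(J\B, B\A) − ℓ(B\A, A) + (2|J\B| − |I|)|(B\A) ∩ J'|`
for `A ⊆ B ⊆ J = J' ∪ J''`. -/
def wexp (I J' J'' A B : Finset ℕ) : ℤ :=
  -(linv ((J' ∪ J'') \ B) (B \ A) : ℤ) - (linv (B \ A) A : ℤ)
    + (2 * (((J' ∪ J'') \ B).card : ℤ) - (I.card : ℤ)) * (((B \ A) ∩ J').card : ℤ)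

lemma linv_union_left (S S' T : Finset ℕ) (h : Disjoint S S') :
    linv (S ∪ S') T = linv S T + linv S' T := by
  unfold linv
  rw [Finset.union_product, Finset.filter_union, Finset.card_union_of_disjoint]
  exact Finset.disjoint_filter_filter (Finset.disjoint_product.mpr (Or.inl h))

lemma linv_union_right (S T T' : Finset ℕ) (h : Disjoint T T') :
    linv S (T ∪ T') = linv S T + linv S T' := by
  unfold linv
  rw [Finset.product_union, Finset.filter_union, Finset.card_union_of_disjoint]
  exact Finset.disjoint_filter_filter (Finset.disjoint_product.mpr (Or.inr h))

lemma linv_add_linv (S T : Finset ℕ) (h : Disjoint S T) :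
    linv S T + linv T S = S.card * T.card := by
  unfold linv
  have himg : (T ×ˢ S).filter (fun p => p.2 < p.1)
      = ((S ×ˢ T).filter (fun p => p.1 < p.2)).image Prod.swap := by
    ext ⟨a, b⟩
    simp only [Finset.mem_filter, Finset.mem_product, Finset.mem_image, Prod.exists]
    constructor
    · rintro ⟨⟨ha, hb⟩, hlt⟩
      exact ⟨b, a, ⟨⟨hb, ha⟩, hlt⟩, rfl⟩
    · rintro ⟨x, y, ⟨⟨hx, hy⟩, hlt⟩, heq⟩
      cases heq
      exact ⟨⟨hy, hx⟩, hlt⟩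
  rw [himg, Finset.card_image_of_injective _ Prod.swap_injective]
  have hsplit : ((S ×ˢ T).filter (fun p => p.1 < p.2))
      = ((S ×ˢ T).filter (fun p => ¬ p.2 < p.1)) := by
    apply Finset.filter_congr
    rintro ⟨a, b⟩ hab
    simp only [Finset.mem_product] at hab
    have hne : a ≠ b := fun he => Finset.disjoint_left.mp h hab.1 (he ▸ hab.2)
    simp only [eq_iff_iff]
    omega
  rw [hsplit, Finset.card_filter_add_card_filter_not, Finset.card_product]

/-- Cocycle identity up to a correction: for `A ⊆ B ⊆ C ⊆ J`, writing `B̂ = B\A`,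
`Ĉ = C\B`, `E(A,B) + E(B,C) = E(A,C) + 2ℓ(B̂ ∩ J', Ĉ) − 2ℓ(Ĉ, B̂ ∩ J'')`. -/
theorem stmt_8 (I J' J'' A B C : Finset ℕ)
    (hdisj : Disjoint J' J'') (hI : Disjoint I (J' ∪ J''))
    (hAB : A ⊆ B) (hBC : B ⊆ C) (hCJ : C ⊆ J' ∪ J'') :
    wexp I J' J'' A B + wexp I J' J'' B C
      = wexp I J' J'' A C
        + 2 * (linv ((B \ A) ∩ J') (C \ B) : ℤ)
        - 2 * (linv (C \ B) ((B \ A) ∩ J'') : ℤ) := by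
  have hBJ : B \ A ⊆ J' ∪ J'' := fun x hx => hCJ (hBC (Finset.mem_sdiff.mp hx).1)
  have h1 : (J' ∪ J'') \ B = ((J' ∪ J'') \ C) ∪ (C \ B) := by
    ext x
    simp only [Finset.mem_sdiff, Finset.mem_union]
    constructor
    · rintro ⟨hx, hb⟩
      by_cases hc : x ∈ C
      · exact Or.inr ⟨hc, hb⟩
      · exact Or.inl ⟨hx, hc⟩
    · rintro (⟨ha, hb⟩ | ⟨ha, hb⟩)
      · exact ⟨ha, fun h => hb (hBC h)⟩
      · exact ⟨Finset.mem_union.mp (hCJ ha), hb⟩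
  have h2 : C \ A = (B \ A) ∪ (C \ B) := by
    ext x
    simp only [Finset.mem_sdiff, Finset.mem_union]
    constructor
    · rintro ⟨hx, ha⟩
      by_cases hb : x ∈ B
      · exact Or.inl ⟨hb, ha⟩
      · exact Or.inr ⟨hx, hb⟩
    · rintro (⟨hx, ha⟩ | ⟨hx, ha⟩)
      · exact ⟨hBC hx, ha⟩
      · exact ⟨hx, fun h => ha (hAB h)⟩
  have h3 : B = A ∪ (B \ A) := (Finset.union_sdiff_of_subset hAB).symm
  have h4 : B \ A = ((B \ A) ∩ J') ∪ ((B \ A) ∩ J'') := by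
    rw [← Finset.inter_union_distrib_left, Finset.inter_eq_left.mpr hBJ]
  have d1 : Disjoint ((J' ∪ J'') \ C) (C \ B) := by
    rw [Finset.disjoint_left]
    intro x hx hy
    exact (Finset.mem_sdiff.mp hx).2 (Finset.mem_sdiff.mp hy).1
  have d2 : Disjoint (B \ A) (C \ B) := by
    rw [Finset.disjoint_left]
    intro x hx hy
    exact (Finset.mem_sdiff.mp hy).2 (Finset.mem_sdiff.mp hx).1
  have d3 : Disjoint A (B \ A) := Finset.disjoint_sdiff
  have d4 : Disjoint ((B \ A) ∩ J') ((B \ A) ∩ J'') :=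
    hdisj.mono Finset.inter_subset_right Finset.inter_subset_right
  have d5 : Disjoint ((B \ A) ∩ J') (C \ B) := d2.mono_left Finset.inter_subset_left
  have hkey : (linv ((B \ A) ∩ J') (C \ B) : ℤ) + (linv (C \ B) ((B \ A) ∩ J') : ℤ)
      = (((B \ A) ∩ J').card : ℤ) * ((C \ B).card : ℤ) := by
    exact_mod_cast linv_add_linv _ _ d5
  have hc1 : ((J' ∪ J'') \ B).card = ((J' ∪ J'') \ C).card + (C \ B).card := by
    rw [h1, Finset.card_union_of_disjoint d1]
  have hc2 : ((C \ A) ∩ J').card = ((B \ A) ∩ J').card + ((C \ B) ∩ J').card := by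
    rw [h2, Finset.union_inter_distrib_right,
      Finset.card_union_of_disjoint (d2.mono Finset.inter_subset_left Finset.inter_subset_left)]
  have e1 : linv ((J' ∪ J'') \ B) (B \ A)
      = linv ((J' ∪ J'') \ C) (B \ A) + linv (C \ B) (B \ A) := by
    rw [h1]; exact linv_union_left _ _ _ d1
  have e3 : linv (C \ B) B = linv (C \ B) A + linv (C \ B) (B \ A) := by
    rw [← linv_union_right _ _ _ d3, Finset.union_sdiff_of_subset hAB]
  have e2 : linv (C \ B) (B \ A)
      = linv (C \ B) ((B \ A) ∩ J') + linv (C \ B) ((B \ A) ∩ J'') := by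
    rw [← linv_union_right _ _ _ d4, ← Finset.inter_union_distrib_left,
      Finset.inter_eq_left.mpr hBJ]
  have e4 : linv ((J' ∪ J'') \ C) (C \ A)
      = linv ((J' ∪ J'') \ C) (B \ A) + linv ((J' ∪ J'') \ C) (C \ B) := by
    rw [h2]; exact linv_union_right _ _ _ d2
  have e5 : linv (C \ A) A = linv (B \ A) A + linv (C \ B) A := by
    rw [h2]; exact linv_union_left _ _ _ d2
  simp only [wexp]
  rw [e1, e3, e4, e5, e2, hc1, hc2]
  push_cast
  linear_combination -2 * hkey
end

section
/- The only irregular chain of maximal length: among all chains (A_1, …, A_{r−1}) with ∅ ⊊ A_1 ⊊ ⋯ ⊊ A_{r−1} ⊊ J (where r = |J|, so |A_k| = k for all k), the unique nowhere-regular chain is π^{1̂} = ({j_{r'+1}}, {j_{r'+1}, j_{r'+2}}, …, J'', J'' ∪ {j_{r'}}, …, J\{j_1}), i.e., the chain that adds the elements of J'' in increasing order and then the elements of J' in decreasing order, stopping before J. -/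
/-- `mM K` is `min (K ∩ J')` if `K ∩ J'` is nonempty, and `max (K ∩ J'')` otherwise
(with junk value `0` when both are empty). -/
def mM (J' J'' K : Finset ℕ) : ℕ :=
  (K ∩ J').min.untopD ((K ∩ J'').max.unbotD 0)

/-- The augmented entry `A_k` of the chain `L = (A_1, …, A_p)`: `A_0 = ∅`,
`A_k = L[k-1]` for `1 ≤ k ≤ p`, and `A_k = J` for `k > p`. -/
def elt (J : Finset ℕ) (L : List (Finset ℕ)) (k : ℕ) : Finset ℕ :=
  if k = 0 then ∅ else L.getD (k - 1) J

/-- `L` is regular at position `i₀` (`1 ≤ i₀ ≤ p`, with `A_0 = ∅`, `A_{p+1} = J`):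
`|A_i| = i` for all `i ≤ i₀` and `A_{i₀} \ A_{i₀−1} = {mM(A_{i₀+1} \ A_{i₀−1})}`. -/
def RegularAt (J' J'' : Finset ℕ) (L : List (Finset ℕ)) (i₀ : ℕ) : Prop :=
  1 ≤ i₀ ∧ i₀ ≤ L.length ∧
  (∀ i, 1 ≤ i → i ≤ i₀ → (elt (J' ∪ J'') L i).card = i) ∧
  elt (J' ∪ J'') L i₀ \ elt (J' ∪ J'') L (i₀ - 1)
    = {mM J' J'' (elt (J' ∪ J'') L (i₀ + 1) \ elt (J' ∪ J'') L (i₀ - 1))}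

/-- A chain is irregular if it is regular at no position. -/
def Irregular (J' J'' : Finset ℕ) (L : List (Finset ℕ)) : Prop :=
  ∀ i₀, ¬ RegularAt J' J'' L i₀

/-- `𝔓₀`: nonempty strict chains `∅ ⊊ A_1 ⊊ ⋯ ⊊ A_p ⊊ J`. -/
def P0 (J : Finset ℕ) : Set (List (Finset ℕ)) :=
  {L | L ≠ [] ∧ L.Chain' (· ⊂ ·) ∧ ∀ A ∈ L, ∅ ⊂ A ∧ A ⊂ J}

/-- The elements of `J''` in increasing order followed by those of `J'` in
decreasing order. -/
def sortedJ (J' J'' : Finset ℕ) : List ℕ :=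
  J''.sort (· ≤ ·) ++ (J'.sort (· ≤ ·)).reverse

/-- The chain of initial segments `(A_1, …, A_m)` of a list `s`,
`A_k = {s_1, …, s_k}`. -/
def chainOf (s : List ℕ) (m : ℕ) : List (Finset ℕ) :=
  (List.range m).map (fun k => (s.take (k + 1)).toFinset)

/-- The maximal chain `1̂`, adding the elements of `J''` in increasing order and
then those of `J'` in decreasing order, ending at `J`. -/
def oneHat (J' J'' : Finset ℕ) : List (Finset ℕ) :=
  chainOf (sortedJ J' J'') (sortedJ J' J'').length

/-- The chain `π^{1̂}`: same as `1̂` but stopping just before `J`. -/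
def piOneHat (J' J'' : Finset ℕ) : List (Finset ℕ) :=
  chainOf (sortedJ J' J'') ((sortedJ J' J'').length - 1)

/-- The path `0̂ = (∅)`. -/
def zeroHat : List (Finset ℕ) := [∅]

/-- `𝔓 = 𝔓₀ ∪ {0̂, 1̂}`. -/
def PP (J' J'' : Finset ℕ) : Set (List (Finset ℕ)) :=
  P0 (J' ∪ J'') ∪ {zeroHat, oneHat J' J''}

/-- The first gap position `i₀`: the length of the maximal initial segment of the
chain along which the set sizes increase by exactly one. -/
def gapIdx (L : List (Finset ℕ)) : ℕ :=
  ((L.zip (List.range L.length)).takeWhile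
    (fun p => decide (p.1.card = p.2 + 1))).length

/-- The insertion map `℘`: inserts `B = A_{i₀} ∪ {mM(A_{i₀+1} \ A_{i₀})}` at the
first gap position; `℘(0̂) = ({min J'})` if `J' ≠ ∅`, else `({max J''})`. -/
def insMap (J' J'' : Finset ℕ) (L : List (Finset ℕ)) : List (Finset ℕ) :=
  if L = zeroHat then [{mM J' J'' (J' ∪ J'')}]
  else
    L.take (gapIdx L) ++
      (elt (J' ∪ J'') L (gapIdx L) ∪
        {mM J' J'' (elt (J' ∪ J'') L (gapIdx L + 1) \ elt (J' ∪ J'') L (gapIdx L))})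
      :: L.drop (gapIdx L)

/-!
A chain of maximal length `r - 1` is the chain of initial segments of a listing `s` of `J`, and it
is regular at position `m + 1` exactly when `s_m = mM {s_m, s_{m+1}}`. For distinct `x, y ∈ J`,
`x ≠ mM {x, y}` says that `x` comes before `y` in the strict total order putting `J''` first,
increasingly, and then `J'`, decreasingly. So the chain is nowhere regular iff `s` is increasing
for that order, i.e. iff `s` is the listing `sortedJ` from which `π^{1̂}` is built.
-/

def OneHatLT (J' J'' : Finset ℕ) (x y : ℕ) : Prop :=
  (x ∈ J'' ∧ y ∈ J'' ∧ x < y) ∨ (x ∈ J'' ∧ y ∈ J') ∨ (x ∈ J' ∧ y ∈ J' ∧ y < x)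

section OneHatLT

variable {J' J'' : Finset ℕ}

lemma oneHatLT_irrefl (hdisj : Disjoint J' J'') (x : ℕ) : ¬ OneHatLT J' J'' x x := by
  have := @Finset.disjoint_left.mp hdisj x
  unfold OneHatLT
  grind

lemma oneHatLT_trans (hdisj : Disjoint J' J'') {x y z : ℕ} :
    OneHatLT J' J'' x y → OneHatLT J' J'' y z → OneHatLT J' J'' x z := by
  have := @Finset.disjoint_left.mp hdisj y
  unfold OneHatLT
  grind

lemma ne_mM_pair_iff (hdisj : Disjoint J' J'') {x y : ℕ} (hx : x ∈ J' ∪ J'')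
    (hy : y ∈ J' ∪ J'') : x ≠ mM J' J'' {x, y} ↔ OneHatLT J' J'' x y := by
  have hd : ∀ a ∈ J', a ∉ J'' := fun _ => (Finset.disjoint_left.mp hdisj ·)
  have hd' : ∀ a ∈ J'', a ∉ J' := fun _ => (Finset.disjoint_right.mp hdisj ·)
  rw [Finset.mem_union] at hx hy
  rcases hx with hx | hx <;> rcases hy with hy | hy
  · rw [mM, Finset.insert_inter_of_mem hx, Finset.singleton_inter_of_mem hy, Finset.min_insert,
      Finset.min_singleton, ← WithTop.coe_min, WithTop.untopD_coe]
    simp [OneHatLT, hx, hy, hd x hx]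
  · rw [mM, Finset.insert_inter_of_mem hx, Finset.singleton_inter_of_notMem (hd' y hy),
      insert_empty_eq, Finset.min_singleton, WithTop.untopD_coe]
    simp [OneHatLT, hd x hx, hd' y hy]
  · rw [mM, Finset.insert_inter_of_notMem (hd' x hx), Finset.singleton_inter_of_mem hy,
      Finset.min_singleton, WithTop.untopD_coe]
    simp [OneHatLT, hx, hy, show x ≠ y from fun h => hd' x hx (h ▸ hy)]
  · rw [mM, Finset.insert_inter_of_notMem (hd' x hx), Finset.singleton_inter_of_notMem (hd' y hy),
      Finset.insert_inter_of_mem hx, Finset.singleton_inter_of_mem hy, Finset.min_empty,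
      Finset.max_insert, Finset.max_singleton, ← WithBot.coe_max, WithBot.unbotD_coe]
    simp [OneHatLT, hx, hy, hd' x hx, hd' y hy]

lemma sortedJ_nodup (hdisj : Disjoint J' J'') : (sortedJ J' J'').Nodup := by
  rw [sortedJ, List.nodup_append]
  refine ⟨Finset.sort_nodup _ _, List.nodup_reverse.mpr (Finset.sort_nodup _ _), ?_⟩
  intro x hx y hy
  simp only [Finset.mem_sort, List.mem_reverse] at hx hy
  exact ne_of_mem_of_not_mem hx (Finset.disjoint_left.mp hdisj hy)

lemma sortedJ_toFinset : (sortedJ J' J'').toFinset = J' ∪ J'' := by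
  simp [sortedJ, Finset.union_comm]

lemma pairwise_oneHatLT_sortedJ : (sortedJ J' J'').Pairwise (OneHatLT J' J'') := by
  rw [sortedJ, List.pairwise_append, List.pairwise_reverse]
  refine ⟨?_, ?_, ?_⟩
  · exact (Finset.sortedLT_sort J'').pairwise.imp_of_mem fun hx hy hxy =>
      Or.inl ⟨(Finset.mem_sort _).mp hx, (Finset.mem_sort _).mp hy, hxy⟩
  · exact (Finset.sortedLT_sort J').pairwise.imp_of_mem fun hx hy hxy =>
      Or.inr (Or.inr ⟨(Finset.mem_sort _).mp hy, (Finset.mem_sort _).mp hx, hxy⟩)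
  · intro _ hx _ hy
    exact Or.inr (Or.inl ⟨(Finset.mem_sort _).mp hx, (Finset.mem_sort _).mp (List.mem_reverse.mp hy)⟩)

lemma eq_sortedJ_of_pairwise (hdisj : Disjoint J' J'') {s : List ℕ} (hs : s.Nodup)
    (hsJ : s.toFinset = J' ∪ J'') (hsort : s.Pairwise (OneHatLT J' J'')) : s = sortedJ J' J'' :=
  List.Perm.eq_of_pairwise
    (fun x _ _ _ hxy hyx => (oneHatLT_irrefl hdisj x (oneHatLT_trans hdisj hxy hyx)).elim)
    hsort pairwise_oneHatLT_sortedJ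
    (List.perm_of_nodup_nodup_toFinset_eq hs (sortedJ_nodup hdisj) (hsJ.trans sortedJ_toFinset.symm))

lemma isChain_ne_mM_iff (hdisj : Disjoint J' J'') {s : List ℕ} (hs : s.Nodup)
    (hsJ : s.toFinset = J' ∪ J'') :
    s.IsChain (fun x y => x ≠ mM J' J'' {x, y}) ↔ s = sortedJ J' J'' := by
  have : Trans (OneHatLT J' J'') (OneHatLT J' J'') (OneHatLT J' J'') := ⟨oneHatLT_trans hdisj⟩
  have hmem : ∀ x ∈ s, x ∈ J' ∪ J'' := fun x hx => hsJ ▸ List.mem_toFinset.mpr hx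
  rw [List.IsChain.iff_of_mem_imp fun x y hx hy => ne_mM_pair_iff hdisj (hmem x hx) (hmem y hy),
    List.isChain_iff_pairwise]
  refine ⟨eq_sortedJ_of_pairwise hdisj hs hsJ, ?_⟩
  rintro rfl
  exact pairwise_oneHatLT_sortedJ

end OneHatLT

lemma List.eq_of_toFinset_take_eq {α : Type*} [DecidableEq α] :
    ∀ {s t : List α}, s.Nodup → t.Nodup →
      (∀ k, (s.take k).toFinset = (t.take k).toFinset) → s = t
  | [], t, _, _, h => ((List.toFinset_eq_empty_iff t).mp (by simpa using (h t.length).symm)).symm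
  | a :: s, [], _, _, h => by simpa using h 1
  | a :: s, b :: t, hs, ht, h => by
    obtain rfl : a = b := by simpa using h 1
    refine congrArg _ (List.eq_of_toFinset_take_eq hs.of_cons ht.of_cons fun k => ?_)
    have hk := congrArg (Finset.erase · a) (h (k + 1))
    simp only [List.take_succ_cons, List.toFinset_cons] at hk
    rwa [Finset.erase_insert (mt (List.mem_of_mem_take ∘ List.mem_toFinset.mp) hs.notMem),
      Finset.erase_insert (mt (List.mem_of_mem_take ∘ List.mem_toFinset.mp) ht.notMem)] at hk

section chainOf

@[simp]
lemma length_chainOf (s : List ℕ) (m : ℕ) : (chainOf s m).length = m := by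
  simp [chainOf]

lemma elt_chainOf (s : List ℕ) (k : ℕ) :
    elt s.toFinset (chainOf s (s.length - 1)) k = (s.take k).toFinset := by
  rcases k with _ | k
  · simp [elt]
  rw [elt, if_neg k.succ_ne_zero, Nat.add_sub_cancel]
  rcases lt_or_ge k (s.length - 1) with hk | hk
  · rw [List.getD_eq_getElem _ _ (by simpa [chainOf] using hk)]
    simp [chainOf]
  · rw [List.getD_eq_default _ _ (by simpa [chainOf] using hk), List.take_of_length_le (by omega)]

lemma toFinset_take_add_sdiff {s : List ℕ} (hs : s.Nodup) (m n : ℕ) :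
    (s.take (m + n)).toFinset \ (s.take m).toFinset = ((s.drop m).take n).toFinset := by
  rw [List.take_add, List.toFinset_append, Finset.union_sdiff_cancel_left]
  exact List.disjoint_toFinset_iff_disjoint.mpr fun _ ha hb =>
    List.disjoint_take_drop hs le_rfl ha ((List.take_sublist _ _).subset hb)

variable {J' J'' : Finset ℕ} {s : List ℕ}

lemma regularAt_chainOf_iff (hs : s.Nodup) (hsJ : s.toFinset = J' ∪ J'') (m : ℕ) :
    RegularAt J' J'' (chainOf s (s.length - 1)) (m + 1) ↔
      ∃ h : m + 1 < s.length, s[m] = mM J' J'' {s[m], s[m + 1]} := by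
  by_cases hm : m + 1 < s.length
  · have hcard : ∀ i, ((s.take i).toFinset).card = min i s.length := fun i => by
      rw [List.toFinset_card_of_nodup (hs.sublist (List.take_sublist _ _)), List.length_take]
    have hdiff : ∀ n, (s.take (m + n)).toFinset \ (s.take m).toFinset
        = ((s[m] :: s[m + 1] :: s.drop (m + 2)).take n).toFinset := fun n => by
      rw [toFinset_take_add_sdiff hs, List.drop_eq_getElem_cons, List.drop_eq_getElem_cons]
    simp only [RegularAt, ← hsJ, elt_chainOf, length_chainOf, hcard, Nat.add_sub_cancel,
      add_assoc, one_add_one_eq_two, hdiff 1, hdiff 2, List.take_succ_cons, List.take_zero,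
      List.toFinset_cons, List.toFinset_nil, insert_empty_eq, Finset.singleton_inj]
    exact ⟨fun h => ⟨hm, h.2.2.2⟩, fun ⟨_, h⟩ => ⟨by omega, by omega, fun i _ _ => by omega, h⟩⟩
  · simp only [RegularAt, length_chainOf, hm, IsEmpty.exists_iff, iff_false]
    omega

lemma irregular_chainOf_iff (hs : s.Nodup) (hsJ : s.toFinset = J' ∪ J'') :
    Irregular J' J'' (chainOf s (s.length - 1)) ↔
      s.IsChain (fun x y => x ≠ mM J' J'' {x, y}) := by
  rw [List.isChain_iff_getElem]
  constructor
  · intro h m hm heq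
    exact h (m + 1) ((regularAt_chainOf_iff hs hsJ m).mpr ⟨hm, heq⟩)
  · rintro h (_ | m) hreg
    · exact absurd hreg.1 (by decide)
    · obtain ⟨hm, heq⟩ := (regularAt_chainOf_iff hs hsJ m).mp hreg
      exact h m hm heq

lemma chainOf_inj {t : List ℕ} (hs : s.Nodup) (ht : t.Nodup) (hst : s.toFinset = t.toFinset) :
    chainOf s (s.length - 1) = chainOf t (t.length - 1) ↔ s = t := by
  refine ⟨fun h => List.eq_of_toFinset_take_eq hs ht fun k => ?_, fun h => h ▸ rfl⟩
  rw [← elt_chainOf, ← elt_chainOf, h, hst]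

end chainOf

section P0

variable {J : Finset ℕ} {L : List (Finset ℕ)}

lemma elt_succ_of_lt {k : ℕ} (hk : k < L.length) : elt J L (k + 1) = L[k] := by
  simp [elt, hk]

lemma elt_of_length_lt {k : ℕ} (hk : L.length < k) : elt J L k = J := by
  simp [elt, show k ≠ 0 by omega, show L.length ≤ k - 1 by omega]

lemma elt_ssubset_succ (hL : L ∈ P0 J) {i : ℕ} (hi : i ≤ L.length) :
    elt J L i ⊂ elt J L (i + 1) := by
  obtain ⟨hne, hchain, hbounds⟩ := hL
  rcases i with _ | i
  · have h0 : 0 < L.length := List.length_pos_iff.mpr hne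
    rw [elt_succ_of_lt h0]
    exact (hbounds _ (List.getElem_mem h0)).1
  rw [elt_succ_of_lt hi]
  rcases lt_or_eq_of_le hi with hi' | hi'
  · rw [elt_succ_of_lt hi']
    exact List.isChain_iff_getElem.mp hchain i hi'
  · rw [elt_of_length_lt (by omega)]
    exact (hbounds _ (List.getElem_mem _)).2

lemma card_elt_add_le (hL : L ∈ P0 J) (i : ℕ) :
    ∀ k, i + k ≤ L.length + 1 → (elt J L i).card + k ≤ (elt J L (i + k)).card
  | 0, _ => le_rfl
  | k + 1, hk => by
    have := Finset.card_lt_card (elt_ssubset_succ hL (i := i + k) (by omega))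
    have := card_elt_add_le hL i k (by omega)
    rw [← add_assoc i]
    omega

lemma length_add_one_le_card (hL : L ∈ P0 J) : L.length + 1 ≤ J.card := by
  simpa [elt, elt_of_length_lt] using card_elt_add_le hL 0 (L.length + 1) (zero_add _).le

lemma card_elt (hL : L ∈ P0 J) (hlen : L.length + 1 = J.card) {i : ℕ} (hi : i ≤ L.length + 1) :
    (elt J L i).card = i := by
  have hlow := card_elt_add_le hL 0 i (by omega)
  have hupp := card_elt_add_le hL i (L.length + 1 - i) (by omega)
  rw [Nat.add_sub_cancel' hi, elt_of_length_lt (Nat.lt_succ_self _)] at hupp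
  rw [zero_add] at hlow
  omega

lemma exists_listing_take_eq_elt (hL : L ∈ P0 J) (hlen : L.length + 1 = J.card) :
    ∀ k ≤ L.length + 1, ∃ s : List ℕ, s.Nodup ∧ s.length = k ∧
      ∀ i ≤ k, (s.take i).toFinset = elt J L i
  | 0, _ => ⟨[], List.nodup_nil, rfl, fun i hi => by simp [Nat.le_zero.mp hi, elt]⟩
  | k + 1, hk => by
    obtain ⟨s, hs, hslen, hstake⟩ := exists_listing_take_eq_elt hL hlen k (by omega)
    obtain ⟨a, ha, hins⟩ := Finset.exists_eq_insert_iff.mpr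
      ⟨(elt_ssubset_succ hL (by omega : k ≤ L.length)).subset,
        by rw [card_elt hL hlen (by omega), card_elt hL hlen hk]⟩
    have hsJ : s.toFinset = elt J L k := by simpa [← hslen] using hstake k le_rfl
    refine ⟨s ++ [a], ?_, by simp [hslen], fun i hi => ?_⟩
    · rw [← List.concat_eq_append, List.nodup_concat]
      exact ⟨fun has => ha (hsJ ▸ List.mem_toFinset.mpr has), hs⟩
    · rcases hi.lt_or_eq with hi | rfl
      · rw [List.take_append_of_le_length (by omega), hstake i (by omega)]
      · rw [List.take_of_length_le (by simp [hslen]), ← hins, ← hsJ]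
        simp

lemma exists_chainOf_eq (hL : L ∈ P0 J) (hlen : L.length + 1 = J.card) :
    ∃ s : List ℕ, s.Nodup ∧ s.toFinset = J ∧ L = chainOf s (s.length - 1) := by
  obtain ⟨s, hs, hslen, hstake⟩ := exists_listing_take_eq_elt hL hlen (L.length + 1) le_rfl
  have hsJ : s.toFinset = J := by
    rw [← List.take_length (l := s), hstake _ hslen.le, hslen, elt_of_length_lt (Nat.lt_succ_self _)]
  refine ⟨s, hs, hsJ, List.ext_getElem (by simp [hslen]) fun i hi _ => ?_⟩
  rw [← elt_succ_of_lt (J := J) hi, ← hstake (i + 1) (by omega)]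
  simp [chainOf]

end P0

theorem stmt_11_general (J' J'' : Finset ℕ) (hdisj : Disjoint J' J'')
    (L : List (Finset ℕ)) (hL : L ∈ P0 (J' ∪ J''))
    (hlen : L.length = (J' ∪ J'').card - 1) :
    Irregular J' J'' L ↔ L = piOneHat J' J'' := by
  obtain ⟨s, hs, hsJ, rfl⟩ := exists_chainOf_eq hL (by have := length_add_one_le_card hL; omega)
  rw [irregular_chainOf_iff hs hsJ, isChain_ne_mM_iff hdisj hs hsJ, piOneHat,
    chainOf_inj hs (sortedJ_nodup hdisj) (hsJ.trans sortedJ_toFinset.symm)]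

/-- Among all chains `∅ ⊊ A_1 ⊊ ⋯ ⊊ A_{r−1} ⊊ J` of maximal length `r − 1`
(`r = |J|`), the **unique** nowhere-regular chain is `π^{1̂}`. -/
theorem stmt_11 (J' J'' : Finset ℕ) (hdisj : Disjoint J' J'')
    (hlt : ∀ a ∈ J', ∀ b ∈ J'', a < b)
    (L : List (Finset ℕ)) (hL : L ∈ P0 (J' ∪ J''))
    (hlen : L.length = (J' ∪ J'').card - 1) :
    Irregular J' J'' L ↔ L = piOneHat J' J'' :=
  stmt_11_general J' J'' hdisj L hL hlen
end

section
/- Weight of the distinguished maximal chain: with edge weights α_A^B = (−q)^{E(A,B)} where E(A,B) = −ℓ(J\B, B\A) − ℓ(B\A, A) + (2|J\B| − |I|)|(B\A)∩J'|, the weight of the chain π^{1̂} (adding J'' in increasing order, then J' in decreasing order, augmented from ∅ to J) equals (−q)^{|J'|(|J'|−1) − |J''|(|J''|−1)} · α_∅^J. -/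
/-- The edge weight `α_A^B = (−q)^{E(A,B)}`. -/
noncomputable def alphaWt {k : Type*} [Field k] (q : k) (I J' J'' A B : Finset ℕ) : k :=
  (-q) ^ (wexp I J' J'' A B)

/-- The weight of a chain `(A_1, …, A_p)`: the product
`α_∅^{A_1} α_{A_1}^{A_2} ⋯ α_{A_p}^{J}` of the edge weights of the chain augmented
by `∅` at the start and `J` at the end. -/
noncomputable def wt {k : Type*} [Field k] (q : k) (I J' J'' : Finset ℕ)
    (L : List (Finset ℕ)) : k :=
  ∏ i ∈ Finset.range (L.length + 1),
    alphaWt q I J' J'' (elt (J' ∪ J'') L i) (elt (J' ∪ J'') L (i + 1))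

/-! Along `π^{1̂}` every step adds a single element `x`, and its edge exponent depends only on
the set of elements added before `x`. While `J''` is filled in increasing order, a step
contributes `-#{y ∈ J'' | y > x} - #{y ∈ J'' | y < x} = 1 - |J''|`. When `x ∈ J'` is added (in
decreasing order), the elements of `J` still missing are those of `J'` below `x` and no
inversions occur, so the step contributes `2·#{y ∈ J' | y < x} - |I|`. Summing gives
`|J'|(|J'|-1) - |J''|(|J''|-1) - |I||J'|`, and `-|I||J'|` is the exponent of `α_∅^J`. -/
open Finset

namespace List

variable {α : Type*} [DecidableEq α]

theorem toFinset_take_add_one (l : List α) {i : ℕ} (hi : i < l.length) :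
    (l.take (i + 1)).toFinset = insert l[i] (l.take i).toFinset := by
  rw [← take_concat_get hi, concat_eq_append, toFinset_append,
    Finset.union_comm]
  rfl

theorem toFinset_take_eq_filter {r : α → α → Prop} [DecidableRel r] [Std.Asymm r]
    {l : List α} (hl : l.Pairwise r) {i : ℕ} (hi : i < l.length) :
    (l.take i).toFinset = l.toFinset.filter (r · l[i]) := by
  have hr := pairwise_iff_getElem.mp hl
  ext a
  rw [mem_toFinset, Finset.mem_filter, mem_take_iff_getElem, mem_toFinset,
    mem_iff_getElem]
  constructor
  · rintro ⟨j, hj, rfl⟩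
    exact ⟨⟨j, _, rfl⟩, hr j i _ hi (lt_min_iff.mp hj).1⟩
  · rintro ⟨⟨j, hj, rfl⟩, hji⟩
    refine ⟨j, lt_min ?_ hj, rfl⟩
    by_contra! hij
    rcases hij.eq_or_lt with rfl | hij
    · exact Std.Irrefl.irrefl _ hji
    · exact Std.Asymm.asymm _ _ hji (hr i j hi hj hij)

theorem prod_range_take_eq_prod_toFinset {M : Type*} [CommMonoid M]
    {r : α → α → Prop} [DecidableRel r] [Std.Asymm r] {l : List α} (hl : l.Pairwise r)
    (f : Finset α → Finset α → M) :
    ∏ i ∈ Finset.range l.length, f (l.take i).toFinset (l.take (i + 1)).toFinset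
      = ∏ x ∈ l.toFinset,
          f (l.toFinset.filter (r · x)) (insert x (l.toFinset.filter (r · x))) := by
  rw [prod_toFinset _ hl.nodup, ← Fin.prod_univ_fun_getElem, Finset.prod_range]
  refine Finset.prod_congr rfl fun i _ => ?_
  rw [toFinset_take_add_one l i.2, toFinset_take_eq_filter hl i.2]

theorem prod_range_take_append {M : Type*} [CommMonoid M] (l₁ l₂ : List α)
    (f : Finset α → Finset α → M) :
    ∏ i ∈ Finset.range (l₁ ++ l₂).length,
        f ((l₁ ++ l₂).take i).toFinset ((l₁ ++ l₂).take (i + 1)).toFinset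
      = (∏ i ∈ Finset.range l₁.length, f (l₁.take i).toFinset (l₁.take (i + 1)).toFinset)
        * ∏ i ∈ Finset.range l₂.length,
            f (l₁.toFinset ∪ (l₂.take i).toFinset) (l₁.toFinset ∪ (l₂.take (i + 1)).toFinset) := by
  rw [length_append, Finset.prod_range_add]
  congr 1
  · refine Finset.prod_congr rfl fun i hi => ?_
    have hi := Finset.mem_range.mp hi
    rw [take_append_of_le_length hi.le, take_append_of_le_length hi]
  · refine Finset.prod_congr rfl fun i _ => ?_
    rw [take_length_add_append, add_assoc, take_length_add_append,
      toFinset_append, toFinset_append]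

end List

theorem Finset.prod_zpow_eq_zpow_sum₀ {ι G₀ : Type*} [CommGroupWithZero G₀] {a : G₀}
    (ha : a ≠ 0) (s : Finset ι) (e : ι → ℤ) : ∏ i ∈ s, a ^ e i = a ^ ∑ i ∈ s, e i := by
  classical
  induction s using Finset.induction_on with
  | empty => simp
  | insert i s hi ih => rw [prod_insert hi, sum_insert hi, ih, zpow_add₀ ha]

theorem Finset.sum_card_filter_lt_mul_two {α R : Type*} [LinearOrder α] [CommRing R]
    (s : Finset α) : (∑ x ∈ s, (#(s.filter (· < x)) : R)) * 2 = #s * (#s - 1) := by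
  refine Finset.induction_on_max s (by simp) fun a s ha ih => ?_
  have ha' : a ∉ s := fun h => lt_irrefl a (ha a h)
  have hfa : (insert a s).filter (· < a) = s := by
    ext y; simp only [mem_filter, mem_insert]
    exact ⟨fun ⟨h, hy⟩ => h.resolve_left (ne_of_lt hy), fun h => ⟨Or.inr h, ha y h⟩⟩
  have hfx : ∀ x ∈ s, (insert a s).filter (· < x) = s.filter (· < x) := by
    intro x hx
    rw [filter_insert, if_neg (not_lt.mpr (ha x hx).le)]
  rw [sum_insert ha', hfa, sum_congr rfl fun x hx => by rw [hfx x hx], card_insert_of_notMem ha',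
    add_mul, ih]
  push_cast
  ring

theorem Finset.card_filter_lt_add_card_filter_gt {α : Type*} [LinearOrder α] {s : Finset α}
    {x : α} (hx : x ∈ s) : #(s.filter (· < x)) + #(s.filter (x < ·)) + 1 = #s := by
  have : s.filter (¬ · < x) = insert x (s.filter (x < ·)) := by
    ext y; simp only [mem_filter, mem_insert, not_lt]
    constructor
    · rintro ⟨hy, hxy⟩; rcases hxy.eq_or_lt with rfl | h; exacts [Or.inl rfl, Or.inr ⟨hy, h⟩]
    · rintro (rfl | ⟨hy, h⟩); exacts [⟨hx, le_rfl⟩, ⟨hy, h.le⟩]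
  rw [add_assoc, ← card_insert_of_notMem (s := s.filter (x < ·)) (a := x) (by simp), ← this,
    card_filter_add_card_filter_not]

theorem linv_singleton_right (S : Finset ℕ) (x : ℕ) : linv S {x} = #(S.filter (x < ·)) := by
  rw [linv, product_singleton, filter_map, card_map]
  rfl

theorem linv_singleton_left (x : ℕ) (A : Finset ℕ) : linv {x} A = #(A.filter (· < x)) := by
  rw [linv, singleton_product, filter_map, card_map]
  rfl

theorem wexp_insert (I J' J'' : Finset ℕ) {A : Finset ℕ} {x : ℕ} (hx : x ∉ A) :
    wexp I J' J'' A (insert x A) =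
      -(#(((J' ∪ J'') \ insert x A).filter (x < ·)) : ℤ) - #(A.filter (· < x))
        + (2 * #((J' ∪ J'') \ insert x A) - #I) * #({x} ∩ J') := by
  rw [wexp, insert_sdiff_cancel hx, linv_singleton_right, linv_singleton_left]

section Ordered

variable {J' J'' : Finset ℕ} (hlt : ∀ a ∈ J', ∀ b ∈ J'', a < b)
include hlt

theorem wexp_filter_lt_insert_of_mem_right (I : Finset ℕ) {x : ℕ} (hx : x ∈ J'') :
    wexp I J' J'' (J''.filter (· < x)) (insert x (J''.filter (· < x))) = 1 - #J'' := by
  have hxJ' : x ∉ J' := fun h => lt_irrefl x (hlt x h x hx)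
  have hgt : ((J' ∪ J'') \ insert x (J''.filter (· < x))).filter (x < ·) = J''.filter (x < ·) := by
    ext y; simp only [mem_filter, mem_sdiff, mem_union, mem_insert]
    constructor
    · rintro ⟨⟨hy | hy, -⟩, hxy⟩
      · exact absurd (hlt y hy x hx) (lt_asymm hxy)
      · exact ⟨hy, hxy⟩
    · rintro ⟨hy, hxy⟩; exact ⟨⟨Or.inr hy, by omega⟩, hxy⟩
  rw [wexp_insert I J' J'' (by simp), hgt, filter_filter, singleton_inter_of_notMem hxJ']
  simp only [and_self, card_empty, Nat.cast_zero, mul_zero, add_zero]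
  have := card_filter_lt_add_card_filter_gt hx
  omega

theorem wexp_union_filter_gt_insert_of_mem_left (I : Finset ℕ) {x : ℕ} (hx : x ∈ J') :
    wexp I J' J'' (J'' ∪ J'.filter (x < ·)) (J'' ∪ insert x (J'.filter (x < ·)))
      = 2 * #(J'.filter (· < x)) - #I := by
  have hxJ'' : x ∉ J'' := fun h => lt_irrefl x (hlt x hx x h)
  have hrest : (J' ∪ J'') \ insert x (J'' ∪ J'.filter (x < ·)) = J'.filter (· < x) := by
    ext y; simp only [mem_filter, mem_sdiff, mem_union, mem_insert]
    constructor
    · rintro ⟨hy | hy, hne⟩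
      · simp only [not_or, not_and, not_lt] at hne
        exact ⟨hy, lt_of_le_of_ne (hne.2.2 hy) hne.1⟩
      · exact absurd (Or.inr (Or.inl hy)) hne
    · rintro ⟨hy, hyx⟩
      refine ⟨Or.inl hy, ?_⟩
      rintro (rfl | hy' | ⟨-, h⟩)
      · exact lt_irrefl y hyx
      · exact lt_irrefl y (lt_trans hyx (hlt x hx y hy'))
      · exact lt_asymm hyx h
  have hlow : (J'' ∪ J'.filter (x < ·)).filter (· < x) = ∅ := by
    refine filter_false_of_mem fun y hy => ?_
    rcases mem_union.mp hy with hy | hy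
    · exact (hlt x hx y hy).not_gt
    · exact (mem_filter.mp hy).2.not_gt
  have hhigh : (J'.filter (· < x)).filter (x < ·) = ∅ :=
    filter_false_of_mem fun y hy => (mem_filter.mp hy).2.not_gt
  rw [union_insert, wexp_insert I J' J'' (by simp [hxJ'']), hrest, hhigh, hlow,
    singleton_inter_of_mem hx]
  simp

theorem prod_alphaWt_of_mem_right {k : Type*} [Field k] (q : k) (I : Finset ℕ) :
    ∏ x ∈ J'', alphaWt q I J' J'' (J''.filter (· < x)) (insert x (J''.filter (· < x)))
      = (-q) ^ (-(#J'' * (#J'' - 1)) : ℤ) := by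
  rw [prod_congr rfl fun x hx => by rw [alphaWt, wexp_filter_lt_insert_of_mem_right hlt I hx],
    prod_const, ← zpow_natCast, ← zpow_mul]
  ring_nf

theorem prod_alphaWt_of_mem_left {k : Type*} [Field k] {q : k} (hq : q ≠ 0) (I : Finset ℕ) :
    ∏ x ∈ J', alphaWt q I J' J'' (J'' ∪ J'.filter (x < ·)) (J'' ∪ insert x (J'.filter (x < ·)))
      = (-q) ^ (#J' * (#J' - 1) - #J' * #I : ℤ) := by
  rw [prod_congr rfl fun x hx => by
      rw [alphaWt, wexp_union_filter_gt_insert_of_mem_left hlt I hx],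
    prod_zpow_eq_zpow_sum₀ (neg_ne_zero.mpr hq), sum_sub_distrib, ← mul_sum, sum_const,
    nsmul_eq_mul, mul_comm 2, sum_card_filter_lt_mul_two]

end Ordered

theorem alphaWt_empty_union {k : Type*} [Field k] (q : k) (I J' J'' : Finset ℕ) :
    alphaWt q I J' J'' ∅ (J' ∪ J'') = (-q) ^ (-(#I * #J') : ℤ) := by
  simp [alphaWt, wexp, linv]

theorem elt_piOneHat (J' J'' : Finset ℕ) {i : ℕ} (hi : i ≤ (sortedJ J' J'').length) :
    elt (J' ∪ J'') (piOneHat J' J'') i = ((sortedJ J' J'').take i).toFinset := by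
  rcases Nat.eq_zero_or_pos i with rfl | hi0
  · simp [elt]
  rw [elt, if_neg hi0.ne', piOneHat, chainOf]
  rcases hi.lt_or_eq with hlt | rfl
  · rw [List.getD_eq_getElem _ _ (by simp; omega)]
    simp only [List.getElem_map, List.getElem_range, Nat.sub_add_cancel hi0]
  · rw [List.getD_eq_default _ _ (by simp), List.take_length]
    simp [sortedJ, union_comm]

theorem wt_piOneHat {k : Type*} [Field k] (q : k) (I : Finset ℕ) {J' J'' : Finset ℕ}
    (hJ : (J' ∪ J'').Nonempty) :
    wt q I J' J'' (piOneHat J' J'') = ∏ i ∈ range (sortedJ J' J'').length,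
      alphaWt q I J' J'' ((sortedJ J' J'').take i).toFinset
        ((sortedJ J' J'').take (i + 1)).toFinset := by
  have hn : 0 < (sortedJ J' J'').length := by
    have : (sortedJ J' J'').length = #J'' + #J' := by simp [sortedJ]
    rcases union_nonempty.mp hJ with h | h <;> have := h.card_pos <;> omega
  have hlen : (piOneHat J' J'').length + 1 = (sortedJ J' J'').length := by
    simp only [piOneHat, chainOf, List.length_map, List.length_range]
    omega
  rw [wt, hlen]
  refine prod_congr rfl fun i hi => ?_
  have hi := mem_range.mp hi
  rw [elt_piOneHat J' J'' hi.le, elt_piOneHat J' J'' hi]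

theorem stmt_12_general {k : Type*} [Field k] (q : k) (hq : q ≠ 0)
    (I J' J'' : Finset ℕ)
    (hlt : ∀ a ∈ J', ∀ b ∈ J'', a < b) :
    wt q I J' J'' (piOneHat J' J'')
      = (-q) ^ ((J'.card : ℤ) * ((J'.card : ℤ) - 1)
            - (J''.card : ℤ) * ((J''.card : ℤ) - 1))
        * alphaWt q I J' J'' ∅ (J' ∪ J'') := by
  rcases (J' ∪ J'').eq_empty_or_nonempty with hJ | hJ
  · obtain ⟨rfl, rfl⟩ := union_eq_empty.mp hJ
    simp [wt, piOneHat, sortedJ, chainOf, elt]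
  rw [wt_piOneHat q I hJ, sortedJ, List.prod_range_take_append,
    List.prod_range_take_eq_prod_toFinset (Finset.sortedLT_sort J'').pairwise]
  simp only [sort_toFinset]
  rw [List.prod_range_take_eq_prod_toFinset (r := (· > ·))
      (List.pairwise_reverse.mpr (Finset.sortedLT_sort J').pairwise)
      (fun A B => alphaWt q I J' J'' (J'' ∪ A) (J'' ∪ B))]
  simp only [List.toFinset_reverse, sort_toFinset]
  rw [prod_alphaWt_of_mem_right hlt, prod_alphaWt_of_mem_left hlt hq, alphaWt_empty_union,
    ← zpow_add₀ (neg_ne_zero.mpr hq), ← zpow_add₀ (neg_ne_zero.mpr hq)]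
  ring_nf

/-- The weight of the distinguished maximal chain `π^{1̂}` equals
`(−q)^{|J'|(|J'|−1) − |J''|(|J''|−1)} · α_∅^J`. -/
theorem stmt_12 {k : Type*} [Field k] (q : k) (hq : q ≠ 0)
    (I J' J'' : Finset ℕ) (hdisj : Disjoint J' J'')
    (hlt : ∀ a ∈ J', ∀ b ∈ J'', a < b) (hI : Disjoint I (J' ∪ J'')) :
    wt q I J' J'' (piOneHat J' J'')
      = (-q) ^ ((J'.card : ℤ) * ((J'.card : ℤ) - 1)
            - (J''.card : ℤ) * ((J''.card : ℤ) - 1))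
        * alphaWt q I J' J'' ∅ (J' ∪ J'') :=
  stmt_12_general q hq I J' J'' hlt
end
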